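/- arXiv:2603.18751 — 9 statements merged into one kernel-verified Lean document; each statement's English description precedes it below -/
import Mathlib

section
/- Let G be a connected graph on n ≥ 2 vertices with exactly two non-cut vertices. Then G is a path graph. -/
/-!
Fix a non-cut vertex `a` and a breadth-first search tree rooted at `a`, given by a parent map
`par` sending each `x ≠ a` to a neighbour one step closer to `a`. A leaf of this tree is a
non-cut vertex of `G`, since every other vertex reaches `a` along its chain of parents. Two
distinct vertices at the same distance from `a` have disjoint sets of descendants, and each set
contains a leaf (a descendant farthest from `a`); together with `a` this gives three non-cut
vertices. Hence `x ↦ dist a x` is injective, and it is then an isomorphism onto the path.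
-/

namespace SimpleGraph

variable {V : Type*} {G : SimpleGraph V}

lemma Reachable.exists_adj_dist_add_one {a x : V} (hx : G.Reachable a x) (hxa : x ≠ a) :
    ∃ p, G.Adj p x ∧ G.dist a p + 1 = G.dist a x := by
  obtain ⟨q, hq⟩ := hx.symm.exists_walk_length_eq_dist
  cases q with
  | nil => exact absurd rfl hxa
  | cons hxp q =>
    have hle : G.dist _ a ≤ q.length := dist_le q
    rw [Walk.length_cons, dist_comm] at hq
    rw [dist_comm] at hle
    exact ⟨_, hxp.symm, by rcases hxp.diff_dist_adj (u := a) with h | h | h <;> omega⟩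

def IsBFSParent (G : SimpleGraph V) (a : V) (par : V → V) : Prop :=
  ∀ x ≠ a, G.Adj (par x) x ∧ G.dist a (par x) + 1 = G.dist a x

lemma Connected.exists_isBFSParent (hG : G.Connected) (a : V) : ∃ par, G.IsBFSParent a par := by
  have hpar (x : V) : ∃ p, x ≠ a → G.Adj p x ∧ G.dist a p + 1 = G.dist a x := by
    by_cases hx : x = a
    · exact ⟨a, fun h => absurd hx h⟩
    · exact (hG a x).exists_adj_dist_add_one hx |>.imp fun _ hp _ => hp
  choose par hpar using hpar
  exact ⟨par, hpar⟩

section ParentTree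

variable {a : V} {par : V → V}

def IsDescendant (a : V) (par : V → V) : V → V → Prop :=
  Relation.ReflTransGen fun p c => c ≠ a ∧ par c = p

lemma IsDescendant.dist_le (hpar : G.IsBFSParent a par) {x y : V}
    (h : IsDescendant a par x y) : G.dist a x ≤ G.dist a y := by
  induction h with
  | refl => rfl
  | tail _ hc ih => have := (hpar _ hc.1).2; rw [hc.2] at this; omega

lemma IsDescendant.eq_of_dist_eq (hpar : G.IsBFSParent a par)
    {x y z : V} (hx : IsDescendant a par x z) (hy : IsDescendant a par y z)
    (hxy : G.dist a x = G.dist a y) : x = y := by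
  induction hx generalizing y with
  | refl =>
    rcases (Relation.ReflTransGen.cases_tail_iff _ _ _).mp hy with rfl | ⟨b, hb, hc⟩
    · rfl
    · have := (hpar _ hc.1).2; rw [hc.2] at this; have := IsDescendant.dist_le hpar hb; omega
  | @tail b c hb hc ih =>
    rcases (Relation.ReflTransGen.cases_tail_iff _ _ _).mp hy with rfl | ⟨b', hb', hc'⟩
    · have := (hpar _ hc.1).2; rw [hc.2] at this; have := IsDescendant.dist_le hpar hb; omega
    · exact ih (hc.2 ▸ hc'.2 ▸ hb') hxy

lemma exists_leaf_isDescendant [Finite V] (hpar : G.IsBFSParent a par)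
    {x : V} (hxa : x ≠ a) :
    ∃ l, IsDescendant a par x l ∧ l ≠ a ∧ ∀ c ≠ a, par c ≠ l := by
  obtain ⟨l, hl, hmax⟩ := Set.exists_max_image {y | IsDescendant a par x y} (G.dist a)
    (Set.toFinite _) ⟨x, Relation.ReflTransGen.refl⟩
  have hxl := IsDescendant.dist_le hpar hl
  refine ⟨l, hl, ?_, fun c hca hcl => ?_⟩
  · rintro rfl
    have := (hpar x hxa).2
    rw [dist_self] at hxl
    omega
  · have := hmax c (Relation.ReflTransGen.tail hl ⟨hca, hcl⟩)
    have := (hpar c hca).2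
    rw [hcl] at this
    omega

lemma Connected.induce_compl_singleton_of_forall_parent_ne (hG : G.Connected)
    (hpar : G.IsBFSParent a par)
    {v : V} (hva : v ≠ a) (hv : ∀ x ≠ a, par x ≠ v) : (G.induce {v}ᶜ).Connected := by
  have ha : a ∈ ({v}ᶜ : Set V) := hva.symm
  have key : ∀ k x (hx : x ∈ ({v}ᶜ : Set V)), G.dist a x = k →
      (G.induce {v}ᶜ).Reachable ⟨a, ha⟩ ⟨x, hx⟩ := by
    intro k
    induction k with
    | zero =>
      intro x hx h
      obtain rfl := hG.dist_eq_zero_iff.mp h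
      rfl
    | succ k ih =>
      intro x hx h
      have hxa : x ≠ a := by rintro rfl; simp at h
      have hpx := (hpar x hxa).2
      exact (ih _ (hv x hxa) (by omega)).trans
        (Adj.reachable (G := G.induce {v}ᶜ) (hpar x hxa).1)
  exact (connected_iff_exists_forall_reachable _).mpr
    ⟨⟨a, ha⟩, fun ⟨x, hx⟩ => key _ x hx rfl⟩

end ParentTree

theorem Connected.injective_dist_of_ncard_noncut_le_two [Finite V] (hG : G.Connected) {a : V}
    (ha : (G.induce {a}ᶜ).Connected)
    (h2 : {v | (G.induce ({v}ᶜ : Set V)).Connected}.ncard ≤ 2) :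
    Function.Injective (G.dist a) := by
  intro x y hxy
  by_contra hne
  obtain ⟨par, hpar⟩ := hG.exists_isBFSParent a
  have hxa : x ≠ a := by
    rintro rfl
    exact hne (hG.dist_eq_zero_iff.mp (hxy.symm.trans dist_self))
  have hya : y ≠ a := by
    rintro rfl
    exact hne (hG.dist_eq_zero_iff.mp (hxy.trans dist_self)).symm
  obtain ⟨lx, hx, hlxa, hlx⟩ := exists_leaf_isDescendant hpar hxa
  obtain ⟨ly, hy, hlya, hly⟩ := exists_leaf_isDescendant hpar hya
  have hl : lx ≠ ly := fun h => hne (IsDescendant.eq_of_dist_eq hpar hx (h ▸ hy) hxy)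
  have hnoncut (l : V) (hla : l ≠ a) (hl : ∀ c ≠ a, par c ≠ l) :
      (G.induce {l}ᶜ).Connected :=
    hG.induce_compl_singleton_of_forall_parent_ne hpar hla hl
  have h3 : ({a, lx, ly} : Set V).ncard ≤ 2 :=
    (Set.ncard_le_ncard (by simp [Set.insert_subset_iff, ha, hnoncut lx hlxa hlx,
      hnoncut ly hlya hly]) (Set.toFinite _)).trans h2
  rw [Set.ncard_eq_three.mpr ⟨a, lx, ly, hlxa.symm, hlya.symm, hl, rfl⟩] at h3
  omega

theorem Connected.nonempty_iso_pathGraph_of_injective_dist [Fintype V] (hG : G.Connected)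
    {a : V} (hinj : Function.Injective (G.dist a)) :
    Nonempty (G ≃g pathGraph (Fintype.card V)) := by
  have hlt (x : V) : G.dist a x < Fintype.card V := by
    obtain ⟨p, hp, hlen⟩ := hG.exists_path_of_dist a x
    exact hlen ▸ hp.length_lt
  let f (x : V) : Fin (Fintype.card V) := ⟨G.dist a x, hlt x⟩
  have hf : Function.Bijective f := (Fintype.bijective_iff_injective_and_card f).mpr
    ⟨fun x y h => hinj (Fin.val_eq_of_eq h), by simp⟩
  have adj_of_dist_add_one {x y : V} (h : G.dist a x + 1 = G.dist a y) : G.Adj x y := by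
    obtain ⟨p, hpy, hp⟩ := (hG a y).exists_adj_dist_add_one (by rintro rfl; simp at h)
    obtain rfl : p = x := hinj (by omega)
    exact hpy
  refine ⟨⟨Equiv.ofBijective f hf, fun {x y} => ?_⟩⟩
  simp only [Equiv.ofBijective_apply, pathGraph_adj, f]
  constructor
  · rintro (h | h)
    · exact adj_of_dist_add_one h
    · exact (adj_of_dist_add_one h).symm
  · intro h
    have := hinj.ne h.ne
    rcases h.diff_dist_adj (u := a) with h | h | h <;> omega

end SimpleGraph

theorem eq_pathGraph_of_two_noncut_general {n : ℕ} (G : SimpleGraph (Fin n))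
    (hG : G.Connected)
    (h2 : {v : Fin n | (G.induce ({v}ᶜ : Set (Fin n))).Connected}.ncard = 2) :
    Nonempty (G ≃g SimpleGraph.pathGraph n) := by
  obtain ⟨a, ha⟩ := Set.nonempty_of_ncard_ne_zero (h2 ▸ two_ne_zero)
  have := hG.nonempty_iso_pathGraph_of_injective_dist
    (hG.injective_dist_of_ncard_noncut_le_two ha h2.le)
  rwa [Fintype.card_fin] at this

/-- A connected graph on `n ≥ 2` vertices with exactly two non-cut vertices
is a path graph. -/
theorem eq_pathGraph_of_two_noncut {n : ℕ} (hn : 2 ≤ n) (G : SimpleGraph (Fin n))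
    (hG : G.Connected)
    (h2 : {v : Fin n | (G.induce ({v}ᶜ : Set (Fin n))).Connected}.ncard = 2) :
    Nonempty (G ≃g SimpleGraph.pathGraph n) :=
  eq_pathGraph_of_two_noncut_general G hG h2
end

section
/- Let R = K[x_1,…,x_{t+1}] and let I = ⟨x_i x_j : 1 ≤ i < j ≤ r⟩ + ⟨x_{r+1},…,x_{t+1}⟩ with 3 ≤ r ≤ t+1. Then the monomial f = x_1 x_2 ⋯ x_r does not belong to I^{r−1}. -/
open MvPolynomial

section Aux

variable {K : Type*} [Field K] {t r : ℕ}

/-- weight: 1 on the first r variables, 2 on the rest. -/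
noncomputable def wfun (r : ℕ) (t : ℕ) : Fin (t + 1) → ℕ := fun i => if i.val < r then 1 else 2

lemma wfun_pos (i : Fin (t + 1)) : 1 ≤ wfun r t i := by
  unfold wfun; split <;> omega

/-- The ideal of polynomials all of whose monomials have weight ≥ d. -/
noncomputable def Pid (K : Type*) [Field K] (r t d : ℕ) : Ideal (MvPolynomial (Fin (t + 1)) K) where
  carrier := {p | ∀ m ∈ p.support, d ≤ Finsupp.weight (wfun r t) m}
  zero_mem' := by simp
  add_mem' := by
    intro a b ha hb m hm
    rcases Finset.mem_union.mp (MvPolynomial.support_add hm) with h | h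
    · exact ha m h
    · exact hb m h
  smul_mem' := by
    intro c x hx m hm
    rw [smul_eq_mul] at hm
    rcases Finset.mem_add.mp (MvPolynomial.support_mul c x hm) with ⟨m1, hm1, m2, hm2, rfl⟩
    calc d ≤ Finsupp.weight (wfun r t) m2 := hx m2 hm2
    _ ≤ _ := by rw [map_add]; omega

lemma Pid_mul_le (a b : ℕ) : Pid K r t a * Pid K r t b ≤ Pid K r t (a + b) := by
  rw [Ideal.mul_le]
  intro p hp q hq m hm
  rcases Finset.mem_add.mp (MvPolynomial.support_mul p q hm) with ⟨m1, hm1, m2, hm2, rfl⟩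
  have h1 := hp m1 hm1
  have h2 := hq m2 hm2
  rw [map_add]
  omega

lemma weight_single_one (i : Fin (t + 1)) :
    Finsupp.weight (wfun r t) (Finsupp.single i 1) = wfun r t i := by
  rw [Finsupp.weight_apply, Finsupp.sum_single_index] <;> simp

lemma prod_X_eq_monomial (s : Finset (Fin (t + 1))) :
    (∏ i ∈ s, (X i : MvPolynomial (Fin (t + 1)) K)) =
      monomial (∑ i ∈ s, Finsupp.single i 1) (1 : K) := by
  classical
  induction s using Finset.cons_induction with
  | empty => simp [monomial_zero']
  | cons j s hj ih =>
      rw [Finset.prod_cons, Finset.sum_cons, ih, MvPolynomial.X,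
        MvPolynomial.monomial_mul, one_mul]

end Aux

/-- In `K[x_1, …, x_{t+1}]`, with
`I = ⟨x_i x_j : 1 ≤ i < j ≤ r⟩ + ⟨x_{r+1}, …, x_{t+1}⟩` and `3 ≤ r ≤ t+1`,
the monomial `f = x_1 ⋯ x_r` does not lie in `I^(r-1)`. -/
theorem prod_not_mem_pow {K : Type*} [Field K] {t r : ℕ} (hr : 3 ≤ r) (hrt : r ≤ t + 1) :
    (∏ i ∈ Finset.univ.filter (fun i : Fin (t + 1) => i.val < r), (X i : MvPolynomial (Fin (t + 1)) K)) ∉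
      (Ideal.span ({p : MvPolynomial (Fin (t + 1)) K |
            ∃ i j : Fin (t + 1), i.val < j.val ∧ j.val < r ∧ p = X i * X j} ∪
          {p : MvPolynomial (Fin (t + 1)) K | ∃ i : Fin (t + 1), r ≤ i.val ∧ p = X i})) ^ (r - 1) := by
  classical
  set s : Finset (Fin (t + 1)) := Finset.univ.filter (fun i : Fin (t + 1) => i.val < r) with hs
  -- the span is contained in Pid 2
  have hspan : Ideal.span ({p : MvPolynomial (Fin (t + 1)) K |
            ∃ i j : Fin (t + 1), i.val < j.val ∧ j.val < r ∧ p = X i * X j} ∪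
          {p : MvPolynomial (Fin (t + 1)) K | ∃ i : Fin (t + 1), r ≤ i.val ∧ p = X i}) ≤
        Pid K r t 2 := by
    rw [Ideal.span_le]
    rintro p (⟨i, j, hij, hjr, rfl⟩ | ⟨i, hi, rfl⟩)
    · intro m hm
      rcases Finset.mem_add.mp (MvPolynomial.support_mul _ _ hm) with ⟨m1, hm1, m2, hm2, rfl⟩
      rw [MvPolynomial.support_X, Finset.mem_singleton] at hm1 hm2
      subst hm1; subst hm2
      rw [map_add, weight_single_one, weight_single_one]
      have := wfun_pos (r := r) i
      have := wfun_pos (r := r) j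
      omega
    · intro m hm
      rw [MvPolynomial.support_X, Finset.mem_singleton] at hm
      subst hm
      rw [weight_single_one]
      unfold wfun
      rw [if_neg (by omega)]
  -- power is contained in Pid (2 * n)
  have hpow : ∀ n : ℕ, (Ideal.span ({p : MvPolynomial (Fin (t + 1)) K |
            ∃ i j : Fin (t + 1), i.val < j.val ∧ j.val < r ∧ p = X i * X j} ∪
          {p : MvPolynomial (Fin (t + 1)) K | ∃ i : Fin (t + 1), r ≤ i.val ∧ p = X i})) ^ n ≤
        Pid K r t (2 * n) := by
    intro n
    induction n with
    | zero => intro p _ m hm; simp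
    | succ n ih =>
        rw [pow_succ]
        refine le_trans (Ideal.mul_mono ih hspan) (le_trans (Pid_mul_le _ _) ?_)
        intro p hp m hm
        have := hp m hm
        omega
  intro hmem
  have hP := hpow (r - 1) hmem
  -- f is a single monomial
  rw [prod_X_eq_monomial] at hP
  set u : Fin (t + 1) →₀ ℕ := ∑ i ∈ s, Finsupp.single i 1 with hu
  have hu_mem : u ∈ (monomial u (1 : K)).support := by
    rw [MvPolynomial.support_monomial, if_neg one_ne_zero]
    exact Finset.mem_singleton_self u
  have hw := hP u hu_mem
  -- compute the weight of u
  have hcard : s.card = r := by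
    have : s = Finset.map (Fin.castLEEmb hrt) Finset.univ := by
      ext a
      simp only [hs, Finset.mem_filter, Finset.mem_univ, true_and, Finset.mem_map,
        Fin.castLEEmb, Function.Embedding.coeFn_mk]
      constructor
      · intro ha
        exact ⟨⟨a.val, ha⟩, by ext; simp⟩
      · rintro ⟨b, rfl⟩
        exact b.isLt
    rw [this, Finset.card_map, Finset.card_univ, Fintype.card_fin]
  have hwu : Finsupp.weight (wfun r t) u = r := by
    rw [hu, map_sum]
    rw [Finset.sum_congr rfl (fun i hi => ?_), Finset.sum_const, smul_eq_mul, mul_one, hcard]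
    rw [weight_single_one]
    unfold wfun
    rw [if_pos (by simp [hs] at hi; exact hi)]
  rw [hwu] at hw
  omega
end

section
/- Let t ≥ 2 and n ≥ t. A subset C = {x_{i_1},…,x_{i_r}} of the vertices of the path P_n (with i_1 < i_2 < ⋯ < i_r) is a minimal t-cover of P_n (i.e., every induced connected subgraph of P_n on t vertices contains a vertex of C, and no proper subset of C has this property) if and only if: i_1 ≤ t; i_2 ≥ t+1 (when r ≥ 2); i_r ≥ n−t+1; i_{r−1} ≤ n−t (when r ≥ 2); i_{j+1} − i_j ≤ t for all 1 ≤ j ≤ r−1; and i_{j+2} − i_j ≥ t+1 for all 1 ≤ j ≤ r−2. -/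
/-- `C` is a `t`-cover of the path `P_n` (vertices `1, …, n`): it meets every set
of `t` consecutive vertices `{a, a+1, …, a+t-1}` with `1 ≤ a` and `a+t-1 ≤ n`. -/
def IsPathCover (n t : ℕ) (C : Finset ℕ) : Prop :=
  ∀ a : ℕ, 1 ≤ a → a + t ≤ n + 1 → ∃ x ∈ C, a ≤ x ∧ x < a + t

/-- `C` is a minimal `t`-cover of `P_n`. -/
def IsMinPathCover (n t : ℕ) (C : Finset ℕ) : Prop :=
  IsPathCover n t C ∧ ∀ D ⊂ C, ¬ IsPathCover n t D

/-- A sufficient condition for being a `t`-cover: some element is in `[1,t]`,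
and every element `x` with `x + t ≤ n` has a successor in `(x, x+t]`. -/
lemma isPathCover_of_gaps {n t : ℕ} {D : Finset ℕ}
    (h1 : ∃ x ∈ D, 1 ≤ x ∧ x ≤ t)
    (h2 : ∀ x ∈ D, x + t ≤ n → ∃ y ∈ D, x < y ∧ y ≤ x + t) :
    IsPathCover n t D := by
  intro a ha hat
  by_contra hcon
  push_neg at hcon
  obtain ⟨x0, hx0D, hx01, hx0t⟩ := h1
  set S := D.filter (fun x => x < a + t) with hSdef
  have hne : S.Nonempty := ⟨x0, by simp only [hSdef, Finset.mem_filter]; exact ⟨hx0D, by omega⟩⟩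
  set m := S.max' hne with hm
  have hmS : m ∈ S := S.max'_mem hne
  rw [hSdef, Finset.mem_filter] at hmS
  have hma : m < a := by
    have := hcon m hmS.1
    omega
  obtain ⟨y, hyD, hmy, hym⟩ := h2 m hmS.1 (by omega)
  have : y ≤ m := S.le_max' y (by rw [hSdef, Finset.mem_filter]; exact ⟨hyD, by omega⟩)
  omega

/-- Characterization of the minimal `t`-covers `C = {x_{i_1}, …, x_{i_r}}`,
`i_1 < ⋯ < i_r`, of the path `P_n` (for `t ≥ 2`, `n ≥ t`): `i_1 ≤ t`;
`i_2 ≥ t+1` (when `r ≥ 2`); `i_r ≥ n-t+1`; `i_{r-1} ≤ n-t` (when `r ≥ 2`);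
`i_{j+1} - i_j ≤ t` for `1 ≤ j ≤ r-1`; and `i_{j+2} - i_j ≥ t+1` for `1 ≤ j ≤ r-2`. -/
theorem minPathCover_iff {n t r : ℕ} (ht : 2 ≤ t) (hn : t ≤ n) (hr : 1 ≤ r)
    (i : ℕ → ℕ) (hmono : StrictMonoOn i (Set.Icc 1 r))
    (hrange : ∀ j ∈ Finset.Icc 1 r, 1 ≤ i j ∧ i j ≤ n) :
    IsMinPathCover n t ((Finset.Icc 1 r).image i) ↔
      (i 1 ≤ t ∧
       (2 ≤ r → t + 1 ≤ i 2) ∧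
       n + 1 ≤ i r + t ∧
       (2 ≤ r → i (r - 1) + t ≤ n) ∧
       (∀ j, 1 ≤ j → j + 1 ≤ r → i (j + 1) ≤ i j + t) ∧
       (∀ j, 1 ≤ j → j + 2 ≤ r → i j + t + 1 ≤ i (j + 2))) := by
  set C := (Finset.Icc 1 r).image i with hCdef
  have hlt : ∀ a b, 1 ≤ a → a < b → b ≤ r → i a < i b := fun a b ha hab hb =>
    hmono ⟨ha, by omega⟩ ⟨by omega, hb⟩ hab
  have hle : ∀ a b, 1 ≤ a → a ≤ b → b ≤ r → i a ≤ i b := by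
    intro a b ha hab hb
    rcases eq_or_lt_of_le hab with h | h
    · rw [h]
    · exact (hlt a b ha h hb).le
  have hrange' : ∀ j, 1 ≤ j → j ≤ r → 1 ≤ i j ∧ i j ≤ n := fun j h1 h2 =>
    hrange j (Finset.mem_Icc.mpr ⟨h1, h2⟩)
  have hmem : ∀ x, x ∈ C ↔ ∃ j, 1 ≤ j ∧ j ≤ r ∧ i j = x := by
    intro x
    simp only [hCdef, Finset.mem_image, Finset.mem_Icc]
    constructor
    · rintro ⟨j, ⟨h1, h2⟩, h3⟩; exact ⟨j, h1, h2, h3⟩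
    · rintro ⟨j, h1, h2, h3⟩; exact ⟨j, ⟨h1, h2⟩, h3⟩
  have hmemi : ∀ j, 1 ≤ j → j ≤ r → i j ∈ C :=
    fun j h1 h2 => Finset.mem_image_of_mem i (Finset.mem_Icc.mpr ⟨h1, h2⟩)
  constructor
  · rintro ⟨hcov, hmin⟩
    -- first: the cover conditions
    have hA : i 1 ≤ t := by
      obtain ⟨x, hx, hax⟩ := hcov 1 le_rfl (by omega)
      rw [hmem] at hx
      obtain ⟨j, hj1, hjr, rfl⟩ := hx
      have := hle 1 j le_rfl hj1 hjr
      omega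
    have hC : n + 1 ≤ i r + t := by
      obtain ⟨x, hx, hax⟩ := hcov (n + 1 - t) (by omega) (by omega)
      rw [hmem] at hx
      obtain ⟨j, hj1, hjr, rfl⟩ := hx
      have := hle j r hj1 hjr le_rfl
      omega
    have hE : ∀ j, 1 ≤ j → j + 1 ≤ r → i (j + 1) ≤ i j + t := by
      intro j hj hjr
      by_contra hcon
      push_neg at hcon
      have hjn : i (j + 1) ≤ n := (hrange' (j + 1) (by omega) hjr).2
      have hj1 : 1 ≤ i j := (hrange' j hj (by omega)).1
      obtain ⟨x, hx, hax⟩ := hcov (i j + 1) (by omega) (by omega)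
      rw [hmem] at hx
      obtain ⟨k, hk1, hkr, rfl⟩ := hx
      have hkj : j < k := by
        by_contra hkk
        push_neg at hkk
        have := hle k j hk1 hkk (by omega)
        omega
      have := hle (j + 1) k (by omega) (by omega) hkr
      omega
    -- minimality conditions
    refine ⟨hA, ?_, hC, ?_, hE, ?_⟩
    · -- B : 2 ≤ r → t + 1 ≤ i 2
      intro hr2
      by_contra hcon
      push_neg at hcon
      refine hmin (C.erase (i 1)) (Finset.erase_ssubset (hmemi 1 le_rfl hr)) ?_
      apply isPathCover_of_gaps
      · refine ⟨i 2, ?_, (hrange' 2 one_le_two hr2).1, by omega⟩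
        rw [Finset.mem_erase]
        exact ⟨by have := hlt 1 2 le_rfl one_lt_two hr2; omega, hmemi 2 one_le_two hr2⟩
      · intro x hx hxt
        rw [Finset.mem_erase, hmem] at hx
        obtain ⟨hne, j, hj1, hjr, rfl⟩ := hx
        have hj2 : 2 ≤ j := by
          rcases Nat.lt_or_ge j 2 with h | h
          · exfalso; interval_cases j; simp at hne
          · exact h
        have hjr' : j < r := by
          rcases Nat.lt_or_ge j r with h | h
          · exact h
          · exfalso
            have : j = r := le_antisymm hjr h
            subst this; omega
        refine ⟨i (j + 1), ?_, hlt j (j + 1) hj1 (by omega) (by omega), hE j hj1 (by omega)⟩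
        rw [Finset.mem_erase]
        exact ⟨by have := hlt 1 (j + 1) le_rfl (by omega) (by omega); omega,
          hmemi (j + 1) (by omega) (by omega)⟩
    · -- D : 2 ≤ r → i (r-1) + t ≤ n
      intro hr2
      by_contra hcon
      push_neg at hcon
      refine hmin (C.erase (i r)) (Finset.erase_ssubset (hmemi r hr le_rfl)) ?_
      apply isPathCover_of_gaps
      · refine ⟨i 1, ?_, (hrange' 1 le_rfl hr).1, hA⟩
        rw [Finset.mem_erase]
        exact ⟨by have := hlt 1 r le_rfl (by omega) le_rfl; omega, hmemi 1 le_rfl hr⟩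
      · intro x hx hxt
        rw [Finset.mem_erase, hmem] at hx
        obtain ⟨hne, j, hj1, hjr, rfl⟩ := hx
        have hjr' : j < r := by
          rcases Nat.lt_or_ge j r with h | h
          · exact h
          · exfalso
            have : j = r := le_antisymm hjr h
            subst this; simp at hne
        have hjr1 : j < r - 1 := by
          rcases Nat.lt_or_ge j (r - 1) with h | h
          · exact h
          · exfalso
            have : j = r - 1 := by omega
            subst this; omega
        refine ⟨i (j + 1), ?_, hlt j (j + 1) hj1 (by omega) (by omega), hE j hj1 (by omega)⟩
        rw [Finset.mem_erase]
        exact ⟨by have := hlt (j + 1) r (by omega) (by omega) le_rfl; omega,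
          hmemi (j + 1) (by omega) (by omega)⟩
    · -- F : i j + t + 1 ≤ i (j+2)
      intro j hj hjr
      by_contra hcon
      push_neg at hcon
      refine hmin (C.erase (i (j + 1)))
        (Finset.erase_ssubset (hmemi (j + 1) (by omega) (by omega))) ?_
      apply isPathCover_of_gaps
      · refine ⟨i 1, ?_, (hrange' 1 le_rfl hr).1, hA⟩
        rw [Finset.mem_erase]
        exact ⟨by have := hlt 1 (j + 1) le_rfl (by omega) (by omega); omega, hmemi 1 le_rfl hr⟩
      · intro x hx hxt
        rw [Finset.mem_erase, hmem] at hx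
        obtain ⟨hne, k, hk1, hkr, rfl⟩ := hx
        have hkj : k ≠ j + 1 := by
          intro h; subst h; simp at hne
        have hkr' : k < r := by
          rcases Nat.lt_or_ge k r with h | h
          · exact h
          · exfalso
            have hkR : k = r := le_antisymm hkr h
            rw [hkR] at hxt
            omega
        rcases eq_or_ne k j with rfl | hkj'
        · refine ⟨i (k + 2), ?_, hlt k (k + 2) hk1 (by omega) hjr, by omega⟩
          rw [Finset.mem_erase]
          exact ⟨by have := hlt (k + 1) (k + 2) (by omega) (by omega) hjr; omega,
            hmemi (k + 2) (by omega) hjr⟩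
        · refine ⟨i (k + 1), ?_, hlt k (k + 1) hk1 (by omega) (by omega),
            hE k hk1 (by omega)⟩
          rw [Finset.mem_erase]
          refine ⟨?_, hmemi (k + 1) (by omega) (by omega)⟩
          intro h
          have hk1j : k + 1 ≠ j + 1 := by omega
          rcases Nat.lt_or_ge (k + 1) (j + 1) with hh | hh
          · have := hlt (k + 1) (j + 1) (by omega) hh (by omega); omega
          · have := hlt (j + 1) (k + 1) (by omega) (by omega) (by omega); omega
  · rintro ⟨hA, hB, hC, hD, hE, hF⟩
    constructor
    · -- cover
      apply isPathCover_of_gaps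
      · exact ⟨i 1, hmemi 1 le_rfl hr, (hrange' 1 le_rfl hr).1, hA⟩
      · intro x hx hxt
        rw [hmem] at hx
        obtain ⟨j, hj1, hjr, rfl⟩ := hx
        have hjr' : j < r := by
          rcases Nat.lt_or_ge j r with h | h
          · exact h
          · exfalso
            have : j = r := le_antisymm hjr h
            subst this; omega
        exact ⟨i (j + 1), hmemi (j + 1) (by omega) (by omega),
          hlt j (j + 1) hj1 (by omega) (by omega), hE j hj1 (by omega)⟩
    · -- minimality
      intro D hDC hcovD
      obtain ⟨x, hxC, hxD⟩ := Finset.exists_of_ssubset hDC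
      rw [hmem] at hxC
      obtain ⟨j, hj1, hjr, rfl⟩ := hxC
      -- find a window containing only `i j` among elements of `C`
      have key : ∃ a, 1 ≤ a ∧ a + t ≤ n + 1 ∧
          ∀ k, 1 ≤ k → k ≤ r → a ≤ i k → i k < a + t → k = j := by
        rcases Nat.lt_or_ge j 2 with hj2 | hj2
        · have hj1' : j = 1 := by omega
          subst hj1'
          rcases Nat.lt_or_ge r 2 with hr2 | hr2
          · -- r = 1
            refine ⟨n + 1 - t, by omega, by omega, ?_⟩
            intro k hk1 hkr _ _
            omega
          · -- j = 1, r ≥ 2 : window [i 2 - t, i 2 - 1]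
            have hB2 := hB hr2
            have h2n : i 2 ≤ n := (hrange' 2 one_le_two hr2).2
            refine ⟨i 2 - t, by omega, by omega, ?_⟩
            intro k hk1 hkr hak hka
            by_contra hk
            have hk2 : 2 ≤ k := by omega
            have := hle 2 k one_le_two hk2 hkr
            omega
        · -- j ≥ 2 : window [i (j-1) + 1, i (j-1) + t]
          have hjlt : i (j - 1) < i j := hlt (j - 1) j (by omega) (by omega) hjr
          have hDr := hD (by omega)
          have hmle : i (j - 1) ≤ i (r - 1) := hle (j - 1) (r - 1) (by omega) (by omega) (by omega)
          refine ⟨i (j - 1) + 1, by omega, by omega, ?_⟩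
          intro k hk1 hkr hak hka
          by_contra hk
          rcases Nat.lt_or_ge k j with hh | hh
          · have := hle k (j - 1) hk1 (by omega) (by omega)
            omega
          · have hkj1 : j + 1 ≤ k := by omega
            have h1 : i (j - 1) + t + 1 ≤ i (j - 1 + 2) := hF (j - 1) (by omega) (by omega)
            have h2 : j - 1 + 2 = j + 1 := by omega
            rw [h2] at h1
            have := hle (j + 1) k (by omega) hkj1 hkr
            omega
      obtain ⟨a, ha1, hat, huniq⟩ := key
      obtain ⟨y, hyD, hay, hya⟩ := hcovD a ha1 hat
      have hyC : y ∈ C := hDC.subset hyD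
      rw [hmem] at hyC
      obtain ⟨k, hk1, hkr, rfl⟩ := hyC
      have : k = j := huniq k hk1 hkr hay hya
      subst this
      exact hxD hyD
end

section
/- Let t ≥ 1 and n ≥ t. A subset C = {x_{i_1},…,x_{i_r}} of the vertices of the cycle C_n (with 1 ≤ i_1 < ⋯ < i_r ≤ n) is a minimal t-cover of C_n if and only if: i_{j+1} − i_j ≤ t for all 1 ≤ j ≤ r−1 and n + i_1 − i_r ≤ t; and i_{j+2} − i_j ≥ t+1 for all 1 ≤ j ≤ r−2, n + i_1 − i_{r−1} ≥ t+1, and n + i_2 − i_r ≥ t+1. -/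
/-- `C` is a `t`-cover of the cycle `C_n` (vertices `ZMod n`): it meets every set
of `t` cyclically consecutive vertices `{a, a+1, …, a+t-1}`. -/
def IsCycleCover (n t : ℕ) (C : Finset (ZMod n)) : Prop :=
  ∀ a : ZMod n, ∃ k : ℕ, k < t ∧ a + (k : ZMod n) ∈ C

/-- `C` is a minimal `t`-cover of the cycle `C_n`. -/
def IsMinCycleCover (n t : ℕ) (C : Finset (ZMod n)) : Prop :=
  IsCycleCover n t C ∧ ∀ D ⊂ C, ¬ IsCycleCover n t D

lemma MCC_resolve {n s c : ℕ} (hn : 1 ≤ n) (hs1 : 1 ≤ s) (hs2 : s ≤ n)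
    (hc1 : 1 ≤ c) (hc2 : c ≤ 2 * n) (h : c % n = s % n) : c = s ∨ c = s + n := by
  have hsm : s % n = s ∨ (s = n ∧ s % n = 0) := by
    rcases lt_or_eq_of_le hs2 with h1 | h1
    · exact Or.inl (Nat.mod_eq_of_lt h1)
    · exact Or.inr ⟨h1, by rw [h1]; exact Nat.mod_self n⟩
  have hcm : c % n = c ∨ (n ≤ c ∧ c % n + n = c) ∨ (c = 2 * n ∧ c % n = 0) := by
    rcases lt_or_ge c n with h1 | h1
    · exact Or.inl (Nat.mod_eq_of_lt h1)
    · rcases lt_or_eq_of_le hc2 with h2 | h2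
      · refine Or.inr (Or.inl ⟨h1, ?_⟩)
        rw [Nat.mod_eq_sub_mod h1, Nat.mod_eq_of_lt (by omega)]
        omega
      · exact Or.inr (Or.inr ⟨h2, by rw [h2]; exact Nat.mul_mod_left 2 n⟩)
  omega

lemma MCC_coverB {n t : ℕ} (ht : 1 ≤ t) (hn : t ≤ n) (S : Finset ℕ)
    (hS : ∀ s ∈ S, 1 ≤ s ∧ s ≤ n)
    (hwin : ∀ a, 1 ≤ a → a ≤ n → ∃ s ∈ S, (a ≤ s ∧ s < a + t) ∨ (a ≤ s + n ∧ s + n < a + t)) :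
    IsCycleCover n t (S.image (fun s => ((s : ℕ) : ZMod n))) := by
  have hn1 : 1 ≤ n := le_trans ht hn
  haveI : NeZero n := ⟨by omega⟩
  intro x
  obtain ⟨a, ha1, ha2, hax⟩ : ∃ a : ℕ, 1 ≤ a ∧ a ≤ n ∧ (a : ZMod n) = x := by
    by_cases h0 : x.val = 0
    · exact ⟨n, hn1, le_refl n, by rw [ZMod.natCast_self]; exact ((ZMod.val_eq_zero x).mp h0).symm⟩
    · exact ⟨x.val, by omega, le_of_lt (ZMod.val_lt x), ZMod.natCast_rightInverse x⟩
  obtain ⟨s, hsS, hc⟩ := hwin a ha1 ha2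
  have hsr := hS s hsS
  rcases hc with ⟨h1, h2⟩ | ⟨h1, h2⟩
  · refine ⟨s - a, by omega, ?_⟩
    have hx : x + ((s - a : ℕ) : ZMod n) = ((s : ℕ) : ZMod n) := by
      rw [← hax, ← Nat.cast_add]
      congr 1
      omega
    rw [hx]
    exact Finset.mem_image_of_mem _ hsS
  · refine ⟨s + n - a, by omega, ?_⟩
    have hx : x + ((s + n - a : ℕ) : ZMod n) = ((s : ℕ) : ZMod n) := by
      rw [← hax, ← Nat.cast_add, show a + (s + n - a) = s + n by omega,
        Nat.cast_add, ZMod.natCast_self, add_zero]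
    rw [hx]
    exact Finset.mem_image_of_mem _ hsS

lemma MCC_notCoverC {n t : ℕ} (ht : 1 ≤ t) (hn : t ≤ n) (S : Finset ℕ)
    (hS : ∀ s ∈ S, 1 ≤ s ∧ s ≤ n) (a : ℕ) (ha1 : 1 ≤ a) (ha2 : a ≤ n + 1)
    (hmiss : ∀ s ∈ S, ¬(a ≤ s ∧ s < a + t) ∧ ¬(a ≤ s + n ∧ s + n < a + t)) :
    ¬ IsCycleCover n t (S.image (fun s => ((s : ℕ) : ZMod n))) := by
  intro hcov
  obtain ⟨k, hk, hmem⟩ := hcov (a : ZMod n)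
  rw [← Nat.cast_add] at hmem
  obtain ⟨s, hsS, hse⟩ := Finset.mem_image.mp hmem
  have hmod := (ZMod.natCast_eq_natCast_iff' s (a + k) n).mp hse
  obtain ⟨hs1, hs2⟩ := hS s hsS
  have h2 := MCC_resolve (n := n) (s := s) (c := a + k) (by omega) hs1 hs2 (by omega)
    (by omega) hmod.symm
  obtain ⟨m1, m2⟩ := hmiss s hsS
  omega

lemma MCC_cover_mono {n t : ℕ} {D E : Finset (ZMod n)} (h : D ⊆ E)
    (hc : IsCycleCover n t D) : IsCycleCover n t E := by
  intro a
  obtain ⟨k, hk, hm⟩ := hc a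
  exact ⟨k, hk, h hm⟩

lemma MCC_min_iff {n t : ℕ} (C : Finset (ZMod n)) :
    IsMinCycleCover n t C ↔ IsCycleCover n t C ∧ ∀ x ∈ C, ¬ IsCycleCover n t (C.erase x) := by
  constructor
  · rintro ⟨h1, h2⟩
    exact ⟨h1, fun x hx => h2 _ (Finset.erase_ssubset hx)⟩
  · rintro ⟨h1, h2⟩
    refine ⟨h1, fun D hD hcov => ?_⟩
    obtain ⟨x, hxC, hxD⟩ := Finset.exists_of_ssubset hD
    exact h2 x hxC (MCC_cover_mono (Finset.subset_erase.mpr ⟨hD.subset, hxD⟩) hcov)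

lemma MCC_exists_min_idx (i : ℕ → ℕ) (K : Finset ℕ) (a : ℕ) (h : ∃ j ∈ K, a ≤ i j) :
    ∃ j ∈ K, a ≤ i j ∧ ∀ j' ∈ K, j' < j → i j' < a := by
  classical
  obtain ⟨j0, hj0, hj0a⟩ := h
  have hFne : (K.filter (fun j => a ≤ i j)).Nonempty := ⟨j0, by simp [hj0, hj0a]⟩
  have hmem := Finset.mem_filter.mp ((K.filter (fun j => a ≤ i j)).min'_mem hFne)
  refine ⟨(K.filter (fun j => a ≤ i j)).min' hFne, hmem.1, hmem.2, fun j' hj' hlt => ?_⟩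
  by_contra hcon
  push_neg at hcon
  have := (K.filter (fun j => a ≤ i j)).min'_le j' (by simp [hj', hcon])
  omega

lemma MCC_workhorse {n t r : ℕ} (ht : 1 ≤ t) (hn : t ≤ n) (i : ℕ → ℕ)
    (hrg : ∀ j, 1 ≤ j → j ≤ r → 1 ≤ i j ∧ i j ≤ n)
    (K : Finset ℕ) (hK : ∀ j ∈ K, 1 ≤ j ∧ j ≤ r)
    (p q : ℕ) (hpK : p ∈ K) (hqK : q ∈ K)
    (hp : ∀ j ∈ K, p ≤ j) (hq : ∀ j ∈ K, j ≤ q)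
    (hstep : ∀ j0 ∈ K, p < j0 → ∃ j1 ∈ K, j1 < j0 ∧ i j0 ≤ i j1 + t)
    (hwrap : n + i p ≤ i q + t) :
    IsCycleCover n t ((K.image i).image (fun s => ((s : ℕ) : ZMod n))) := by
  apply MCC_coverB ht hn
  · intro s hs
    obtain ⟨j, hj, rfl⟩ := Finset.mem_image.mp hs
    exact hrg j (hK j hj).1 (hK j hj).2
  · intro a ha1 ha2
    have hip := hrg p (hK p hpK).1 (hK p hpK).2
    have hiq := hrg q (hK q hqK).1 (hK q hqK).2
    rcases le_or_gt a (i p) with hap | hap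
    · exact ⟨i p, Finset.mem_image_of_mem i hpK, Or.inl ⟨hap, by omega⟩⟩
    · rcases le_or_gt a (i q) with haq | haq
      · obtain ⟨j0, hj0K, hj0a, hmin⟩ := MCC_exists_min_idx i K a ⟨q, hqK, haq⟩
        have hpj0 : p < j0 := lt_of_le_of_ne (hp j0 hj0K) (by rintro rfl; omega)
        obtain ⟨j1, hj1K, hj1lt, hgap⟩ := hstep j0 hj0K hpj0
        have := hmin j1 hj1K hj1lt
        exact ⟨i j0, Finset.mem_image_of_mem i hj0K, Or.inl ⟨hj0a, by omega⟩⟩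
      · exact ⟨i p, Finset.mem_image_of_mem i hpK, Or.inr ⟨by omega, by omega⟩⟩

/-- Characterization of the minimal `t`-covers `C = {x_{i_1}, …, x_{i_r}}`,
`1 ≤ i_1 < ⋯ < i_r ≤ n`, of the cycle `C_n` (for `t ≥ 1`, `n ≥ t`):
`i_{j+1} - i_j ≤ t` for `1 ≤ j ≤ r-1`, `n + i_1 - i_r ≤ t`;
`i_{j+2} - i_j ≥ t+1` for `1 ≤ j ≤ r-2`, `n + i_1 - i_{r-1} ≥ t+1`, and
`n + i_2 - i_r ≥ t+1`. -/
theorem minCycleCover_iff {n t r : ℕ} (ht : 1 ≤ t) (hn : t ≤ n) (hr : 1 ≤ r)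
    (i : ℕ → ℕ) (hmono : StrictMonoOn i (Set.Icc 1 r))
    (hrange : ∀ j ∈ Finset.Icc 1 r, 1 ≤ i j ∧ i j ≤ n) :
    IsMinCycleCover n t ((Finset.Icc 1 r).image (fun j => ((i j : ℕ) : ZMod n))) ↔
      ((∀ j, 1 ≤ j → j + 1 ≤ r → i (j + 1) ≤ i j + t) ∧
       n + i 1 ≤ i r + t ∧
       (∀ j, 1 ≤ j → j + 2 ≤ r → i j + t + 1 ≤ i (j + 2)) ∧
       (2 ≤ r → i (r - 1) + t + 1 ≤ n + i 1) ∧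
       (2 ≤ r → i r + t + 1 ≤ n + i 2)) := by
  classical
  have hn1 : 1 ≤ n := le_trans ht hn
  have hrg : ∀ j, 1 ≤ j → j ≤ r → 1 ≤ i j ∧ i j ≤ n := fun j h1 h2 =>
    hrange j (Finset.mem_Icc.mpr ⟨h1, h2⟩)
  have hmlt : ∀ j l, 1 ≤ j → j < l → l ≤ r → i j < i l := fun j l h1 h2 h3 =>
    hmono ⟨h1, by omega⟩ ⟨by omega, h3⟩ h2
  have hmle : ∀ j l, 1 ≤ j → j ≤ l → l ≤ r → i j ≤ i l := by
    intro j l h1 h2 h3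
    rcases eq_or_lt_of_le h2 with h | h
    · rw [h]
    · exact le_of_lt (hmlt j l h1 h h3)
  have hKfull : ∀ j ∈ Finset.Icc 1 r, 1 ≤ j ∧ j ≤ r := fun j hj => Finset.mem_Icc.mp hj
  have hCimg : (Finset.Icc 1 r).image (fun j => ((i j : ℕ) : ZMod n)) =
      ((Finset.Icc 1 r).image i).image (fun s => ((s : ℕ) : ZMod n)) := by
    rw [Finset.image_image]
    rfl
  have hcast_inj : ∀ a b : ℕ, 1 ≤ a → a ≤ n → 1 ≤ b → b ≤ n →
      ((a : ℕ) : ZMod n) = ((b : ℕ) : ZMod n) → a = b := by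
    intro a b ha1 ha2 hb1 hb2 h
    have hmod := (ZMod.natCast_eq_natCast_iff' a b n).mp h
    have := MCC_resolve (n := n) (s := b) (c := a) hn1 hb1 hb2 ha1 (by omega) hmod
    omega
  have hSr' : ∀ s ∈ (Finset.Icc 1 r).image i, 1 ≤ s ∧ s ≤ n := by
    intro s hs; obtain ⟨l, hl, rfl⟩ := Finset.mem_image.mp hs
    exact hrg l (hKfull l hl).1 (hKfull l hl).2
  have hSrE : ∀ m, ∀ s ∈ ((Finset.Icc 1 r).erase m).image i, 1 ≤ s ∧ s ≤ n := by
    intro m s hs; obtain ⟨l, hl, rfl⟩ := Finset.mem_image.mp hs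
    have := Finset.mem_Icc.mp (Finset.mem_of_mem_erase hl)
    exact hrg l this.1 this.2
  have hKE : ∀ m, ∀ j ∈ (Finset.Icc 1 r).erase m, 1 ≤ j ∧ j ≤ r := fun m j hj =>
    Finset.mem_Icc.mp (Finset.mem_of_mem_erase hj)
  have hmemE : ∀ m j, 1 ≤ j → j ≤ r → j ≠ m → j ∈ (Finset.Icc 1 r).erase m := fun m j h1 h2 h3 =>
    Finset.mem_erase.mpr ⟨h3, Finset.mem_Icc.mpr ⟨h1, h2⟩⟩
  have hSm : ∀ m, 1 ≤ m → m ≤ r →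
      (((Finset.Icc 1 r).image i).image (fun s => ((s : ℕ) : ZMod n))).erase ((i m : ℕ) : ZMod n)
        = (((Finset.Icc 1 r).erase m).image i).image (fun s => ((s : ℕ) : ZMod n)) := by
    intro m hm1 hm2
    ext x
    simp only [Finset.mem_erase, Finset.mem_image, Finset.mem_Icc]
    constructor
    · rintro ⟨hne, s, ⟨j, hj, rfl⟩, rfl⟩
      refine ⟨i j, ⟨j, ⟨?_, hj⟩, rfl⟩, rfl⟩
      rintro rfl
      exact hne rfl
    · rintro ⟨s, ⟨j, ⟨hjm, hj⟩, rfl⟩, rfl⟩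
      refine ⟨?_, i j, ⟨j, hj, rfl⟩, rfl⟩
      intro hEq
      have heq2 := hcast_inj (i j) (i m) (hrg j hj.1 hj.2).1 (hrg j hj.1 hj.2).2
        (hrg m hm1 hm2).1 (hrg m hm1 hm2).2 hEq
      rcases lt_trichotomy j m with h | h | h
      · exact absurd heq2 (Nat.ne_of_lt (hmlt j m hj.1 h hm2))
      · exact hjm h
      · exact absurd heq2.symm (Nat.ne_of_lt (hmlt m j hm1 h hj.2))
  rw [hCimg, MCC_min_iff]
  constructor
  · rintro ⟨hcov, hmin⟩
    have g1 : ∀ j, 1 ≤ j → j + 1 ≤ r → i (j + 1) ≤ i j + t := by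
      intro j hj1 hjr
      by_contra hcon
      push_neg at hcon
      have hjn0 := hrg j hj1 (by omega)
      have hjn := hrg (j + 1) (by omega) hjr
      refine MCC_notCoverC ht hn _ hSr' (i j + 1) (by omega) (by omega) ?_ hcov
      intro s hs
      obtain ⟨l, hl, rfl⟩ := Finset.mem_image.mp hs
      obtain ⟨hl1, hl2⟩ := hKfull l hl
      have hln := hrg l hl1 hl2
      constructor
      · rintro ⟨h1, h2⟩
        rcases le_or_gt l j with h | h
        · have := hmle l j hl1 h (by omega); omega
        · have := hmle (j + 1) l (by omega) h hl2; omega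
      · rintro ⟨h1, h2⟩
        omega
    have g2 : n + i 1 ≤ i r + t := by
      by_contra hcon
      push_neg at hcon
      have hirn := hrg r hr le_rfl
      refine MCC_notCoverC ht hn _ hSr' (i r + 1) (by omega) (by omega) ?_ hcov
      intro s hs
      obtain ⟨l, hl, rfl⟩ := Finset.mem_image.mp hs
      obtain ⟨hl1, hl2⟩ := hKfull l hl
      have h1l := hmle 1 l le_rfl hl1 hl2
      have hlr := hmle l r hl1 hl2 le_rfl
      constructor <;> rintro ⟨hA, hB⟩ <;> omega
    have g3 : ∀ j, 1 ≤ j → j + 2 ≤ r → i j + t + 1 ≤ i (j + 2) := by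
      intro j hj1 hjr
      by_contra hcon
      push_neg at hcon
      refine hmin ((i (j + 1) : ℕ) : ZMod n)
        (Finset.mem_image_of_mem _
          (Finset.mem_image_of_mem i (Finset.mem_Icc.mpr ⟨by omega, by omega⟩))) ?_
      rw [hSm (j + 1) (by omega) (by omega)]
      refine MCC_workhorse ht hn i hrg _ (hKE (j + 1)) 1 r (hmemE _ 1 le_rfl hr (by omega))
        (hmemE _ r hr le_rfl (by omega)) (fun l hl => (hKE _ l hl).1)
        (fun l hl => (hKE _ l hl).2) ?_ g2
      intro j0 hj0 hj0p
      obtain ⟨hj01, hj02⟩ := hKE _ j0 hj0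
      have hj0m := (Finset.mem_erase.mp hj0).1
      rcases eq_or_ne (j0 - 1) (j + 1) with h | h
      · refine ⟨j, hmemE _ j hj1 (by omega) (by omega), by omega, ?_⟩
        rw [show j0 = j + 2 by omega]
        omega
      · refine ⟨j0 - 1, hmemE _ (j0 - 1) (by omega) (by omega) h, by omega, ?_⟩
        have := g1 (j0 - 1) (by omega) (by omega)
        rw [show j0 - 1 + 1 = j0 by omega] at this
        omega
    have g4 : 2 ≤ r → i (r - 1) + t + 1 ≤ n + i 1 := by
      intro hr2
      by_contra hcon
      push_neg at hcon
      refine hmin ((i r : ℕ) : ZMod n)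
        (Finset.mem_image_of_mem _
          (Finset.mem_image_of_mem i (Finset.mem_Icc.mpr ⟨hr, le_rfl⟩))) ?_
      rw [hSm r hr le_rfl]
      refine MCC_workhorse ht hn i hrg _ (hKE r) 1 (r - 1) (hmemE _ 1 le_rfl hr (by omega))
        (hmemE _ (r - 1) (by omega) (by omega) (by omega))
        (fun l hl => (hKE _ l hl).1) (fun l hl => ?_) ?_ (by omega)
      · have h2 := hKE _ l hl
        have h3 := (Finset.mem_erase.mp hl).1
        omega
      · intro j0 hj0 hj0p
        have h2 := hKE _ j0 hj0
        have h3 := (Finset.mem_erase.mp hj0).1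
        refine ⟨j0 - 1, hmemE _ (j0 - 1) (by omega) (by omega) (by omega), by omega, ?_⟩
        have := g1 (j0 - 1) (by omega) (by omega)
        rw [show j0 - 1 + 1 = j0 by omega] at this
        omega
    have g5 : 2 ≤ r → i r + t + 1 ≤ n + i 2 := by
      intro hr2
      by_contra hcon
      push_neg at hcon
      refine hmin ((i 1 : ℕ) : ZMod n)
        (Finset.mem_image_of_mem _
          (Finset.mem_image_of_mem i (Finset.mem_Icc.mpr ⟨le_rfl, hr⟩))) ?_
      rw [hSm 1 le_rfl hr]
      refine MCC_workhorse ht hn i hrg _ (hKE 1) 2 r (hmemE _ 2 (by omega) hr2 (by omega))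
        (hmemE _ r hr le_rfl (by omega))
        (fun l hl => ?_) (fun l hl => (hKE _ l hl).2) ?_ (by omega)
      · have h2 := hKE _ l hl
        have h3 := (Finset.mem_erase.mp hl).1
        omega
      · intro j0 hj0 hj0p
        have h2 := hKE _ j0 hj0
        have h3 := (Finset.mem_erase.mp hj0).1
        refine ⟨j0 - 1, hmemE _ (j0 - 1) (by omega) (by omega) (by omega), by omega, ?_⟩
        have := g1 (j0 - 1) (by omega) (by omega)
        rw [show j0 - 1 + 1 = j0 by omega] at this
        omega
    exact ⟨g1, g2, g3, g4, g5⟩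
  · rintro ⟨g1, g2, g3, g4, g5⟩
    constructor
    · refine MCC_workhorse ht hn i hrg _ hKfull 1 r (Finset.mem_Icc.mpr ⟨le_rfl, hr⟩)
        (Finset.mem_Icc.mpr ⟨hr, le_rfl⟩) (fun l hl => (hKfull l hl).1)
        (fun l hl => (hKfull l hl).2) ?_ g2
      intro j0 hj0 hj0p
      have h2 := hKfull j0 hj0
      refine ⟨j0 - 1, Finset.mem_Icc.mpr ⟨by omega, by omega⟩, by omega, ?_⟩
      have := g1 (j0 - 1) (by omega) (by omega)
      rw [show j0 - 1 + 1 = j0 by omega] at this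
      omega
    · intro x hx
      obtain ⟨s, hsS, rfl⟩ := Finset.mem_image.mp hx
      obtain ⟨m, hm, rfl⟩ := Finset.mem_image.mp hsS
      obtain ⟨hm1, hm2⟩ := Finset.mem_Icc.mp hm
      rw [hSm m hm1 hm2]
      rcases eq_or_lt_of_le hr with hr1 | hr2
      · refine MCC_notCoverC ht hn _ (hSrE m) 1 le_rfl (by omega) ?_
        intro s hs
        obtain ⟨l, hl, rfl⟩ := Finset.mem_image.mp hs
        have h2 := hKE m l hl
        have h3 := (Finset.mem_erase.mp hl).1
        omega
      · rcases eq_or_ne m 1 with heq1 | hm1'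
        · rw [heq1]
          have hirn := hrg r (by omega) le_rfl
          have hg := g5 (by omega)
          refine MCC_notCoverC ht hn _ (hSrE 1) (i r + 1) (by omega) (by omega) ?_
          intro s hs
          obtain ⟨l, hl, rfl⟩ := Finset.mem_image.mp hs
          obtain ⟨hl1, hl2⟩ := hKE 1 l hl
          have hlne := (Finset.mem_erase.mp hl).1
          have h2l := hmle 2 l (by omega) (by omega) hl2
          have hlr := hmle l r hl1 hl2 le_rfl
          constructor <;> rintro ⟨hA, hB⟩ <;> omega
        · rcases eq_or_ne m r with heqr | hmr'
          · rw [heqr]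
            have hirn := hrg (r - 1) (by omega) (by omega)
            have hg := g4 (by omega)
            refine MCC_notCoverC ht hn _ (hSrE r) (i (r - 1) + 1) (by omega) (by omega) ?_
            intro s hs
            obtain ⟨l, hl, rfl⟩ := Finset.mem_image.mp hs
            obtain ⟨hl1, hl2⟩ := hKE r l hl
            have hlne := (Finset.mem_erase.mp hl).1
            have h1l := hmle 1 l le_rfl hl1 hl2
            have hlr := hmle l (r - 1) hl1 (by omega) (by omega)
            constructor <;> rintro ⟨hA, hB⟩ <;> omega
          · have him1 := hrg (m - 1) (by omega) (by omega)
            have him2 := hrg (m + 1) (by omega) (by omega)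
            have hg := g3 (m - 1) (by omega) (by omega)
            rw [show m - 1 + 2 = m + 1 by omega] at hg
            refine MCC_notCoverC ht hn _ (hSrE m) (i (m - 1) + 1) (by omega) (by omega) ?_
            intro s hs
            obtain ⟨l, hl, rfl⟩ := Finset.mem_image.mp hs
            obtain ⟨hl1, hl2⟩ := hKE m l hl
            have hlne := (Finset.mem_erase.mp hl).1
            have hln := hrg l hl1 hl2
            constructor
            · rintro ⟨hA, hB⟩
              rcases le_or_gt l (m - 1) with h | h
              · have := hmle l (m - 1) hl1 h (by omega); omega
              · have := hmle (m + 1) l (by omega) (by omega) hl2; omega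
            · rintro ⟨hA, hB⟩
              omega
end

section
/- If t does not divide n (n > t ≥ 2), then there is no family of t pairwise disjoint t-covers of the cycle C_n. Consequently J_t(C_n) is not König. -/
lemma cover_card_lb {n t : ℕ} (hn : 0 < n) {C : Finset (ZMod n)}
    (hC : IsCycleCover n t C) : n ≤ t * C.card := by
  haveI : NeZero n := ⟨hn.ne'⟩
  choose f hf1 hf2 using hC
  have key := Finset.card_le_mul_card_image_of_maps_to
    (f := fun a : ZMod n => a + (f a : ZMod n)) (s := Finset.univ) (t := C)
    (fun a _ => hf2 a) t ?_
  · simpa [ZMod.card] using key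
  · intro c _
    have hsub : ({a ∈ Finset.univ | a + (f a : ZMod n) = c} : Finset (ZMod n)) ⊆
        (Finset.range t).image (fun k : ℕ => c - (k : ZMod n)) := by
      intro a ha
      simp only [Finset.mem_filter, Finset.mem_univ, true_and] at ha
      refine Finset.mem_image.2 ⟨f a, Finset.mem_range.2 (hf1 a), ?_⟩
      rw [← ha]; ring
    calc _ ≤ ((Finset.range t).image (fun k : ℕ => c - (k : ZMod n))).card :=
          Finset.card_le_card hsub
      _ ≤ (Finset.range t).card := Finset.card_image_le
      _ = t := Finset.card_range t

/-- If `t` does not divide `n` (with `n > t ≥ 2`), then there is no family of `t`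
pairwise disjoint `t`-covers of the cycle `C_n`; consequently `J_t(C_n)` is not König. -/
theorem no_disjoint_covers {n t : ℕ} (ht : 2 ≤ t) (hn : t < n) (hdvd : ¬ t ∣ n) :
    ¬ ∃ F : Fin t → Finset (ZMod n),
        (∀ a : Fin t, IsCycleCover n t (F a)) ∧
        (∀ a b : Fin t, a ≠ b → Disjoint (F a) (F b)) := by
  rintro ⟨F, hcov, hdisj⟩
  have hn0 : 0 < n := by omega
  haveI : NeZero n := ⟨hn0.ne'⟩
  haveI : NeZero t := ⟨by omega⟩
  -- each cover: n ≤ t * card (F i)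
  have hlb : ∀ i : Fin t, n ≤ t * (F i).card := fun i => cover_card_lb hn0 (hcov i)
  -- sum of cards ≤ n
  have hsum_le : ∑ i : Fin t, (F i).card ≤ n := by
    have h1 : ∑ i : Fin t, (F i).card = (Finset.univ.biUnion F).card := by
      rw [Finset.card_biUnion]
      intro a _ b _ hab
      exact hdisj a b hab
    rw [h1]
    calc (Finset.univ.biUnion F).card ≤ (Finset.univ : Finset (ZMod n)).card :=
          Finset.card_le_card (Finset.subset_univ _)
      _ = n := by simp [ZMod.card]
  -- sum of cards ≥ n
  have htn : t * n ≤ t * ∑ i : Fin t, (F i).card := by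
    rw [Finset.mul_sum]
    calc t * n = ∑ _i : Fin t, n := by simp [mul_comm]
      _ ≤ ∑ i : Fin t, t * (F i).card := Finset.sum_le_sum fun i _ => hlb i
  have hsum_ge : n ≤ ∑ i : Fin t, (F i).card :=
    le_of_mul_le_mul_left htn (by omega)
  have hsum_eq : ∑ i : Fin t, (F i).card = n := le_antisymm hsum_le hsum_ge
  -- hence each t * card (F i) = n, in particular for i = 0, so t ∣ n
  set i0 : Fin t := ⟨0, by omega⟩
  have hrest : (t - 1) * n ≤ ∑ i ∈ Finset.univ.erase i0, t * (F i).card := by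
    calc (t - 1) * n = ∑ _i ∈ Finset.univ.erase i0, n := by
          rw [Finset.sum_const, smul_eq_mul, Finset.card_erase_of_mem (Finset.mem_univ _)]
          simp
      _ ≤ _ := Finset.sum_le_sum fun i _ => hlb i
  have hsum' : ∑ i : Fin t, t * (F i).card = t * n := by
    rw [← Finset.mul_sum, hsum_eq]
  have hsplit : t * (F i0).card + ∑ i ∈ Finset.univ.erase i0, t * (F i).card
      = ∑ i : Fin t, t * (F i).card :=
    Finset.add_sum_erase Finset.univ (fun i => t * (F i).card) (Finset.mem_univ i0)
  have ht1 : t - 1 + 1 = t := Nat.sub_add_cancel (by omega)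
  have ht2 : (t - 1) * n + n = t * n := by rw [← ht1, add_mul, one_mul]; simp
  have h0 : t * (F i0).card ≤ n := by
    have := hlb i0
    omega
  have : t * (F i0).card = n := le_antisymm h0 (hlb i0)
  exact hdvd ⟨(F i0).card, this.symm⟩
end

section
/- For t ≥ 2 and n ≥ t, the cover ideal J_t(P_n) of the t-connected ideal of the path P_n satisfies J_t(P_n)^{(s)} = J_t(P_n)^s for all s ≥ 1. -/
open MvPolynomial Finset

section PathCoverAux
variable {n t : ℕ}

/-- window weight of an exponent vector: sum of exponents over the window `[a, a+t)`. -/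
def wt (t a : ℕ) (m : Fin n →₀ ℕ) : ℕ :=
  ∑ j ∈ univ.filter (fun j : Fin n => a ≤ j.val ∧ j.val < a + t), m j

lemma wt_add (t a : ℕ) (m m' : Fin n →₀ ℕ) : wt t a (m + m') = wt t a m + wt t a m' := by
  simp [wt, Finset.sum_add_distrib]

variable {K : Type*} [Field K]

/-- the ideal of polynomials all of whose monomials have window weight ≥ s -/
def V (t a s : ℕ) : Ideal (MvPolynomial (Fin n) K) where
  carrier := {p | ∀ m ∈ p.support, s ≤ wt t a m}
  zero_mem' := by simp
  add_mem' := by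
    intro p q hp hq m hm
    rcases Finset.mem_union.1 (MvPolynomial.support_add hm) with h | h
    · exact hp m h
    · exact hq m h
  smul_mem' := by
    intro c p hp m hm
    have := MvPolynomial.support_mul c p hm
    rcases Finset.mem_add.1 this with ⟨m₁, h₁, m₂, h₂, rfl⟩
    have := hp m₂ h₂
    rw [wt_add]
    omega

lemma pow_le_V (t a s : ℕ) :
    (Ideal.span {p : MvPolynomial (Fin n) K |
        ∃ j : Fin n, a ≤ j.val ∧ j.val < a + t ∧ p = X j}) ^ s ≤ V t a s := by
  induction s with
  | zero => intro p _; intro m _; exact Nat.zero_le _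
  | succ s ih =>
      rw [pow_succ]
      refine Ideal.mul_le.2 (fun p hp q hq => ?_)
      have hq1 : q ∈ (V t a 1 : Ideal (MvPolynomial (Fin n) K)) := by
        refine Ideal.span_le.2 ?_ hq
        rintro r ⟨j, hj1, hj2, rfl⟩
        intro m hm
        have : m = Finsupp.single j 1 := by
          simp [X, support_monomial] at hm; exact hm.symm
        subst this
        have hjw : j ∈ univ.filter (fun j : Fin n => a ≤ j.val ∧ j.val < a + t) := by
          simp [hj1, hj2]
        calc 1 = (Finsupp.single j 1 : Fin n →₀ ℕ) j := by simp
        _ ≤ wt t a (Finsupp.single j 1) := Finset.single_le_sum (fun _ _ => Nat.zero_le _) hjw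
      intro m hm
      rcases Finset.mem_add.1 (MvPolynomial.support_mul p q hm) with ⟨m₁, h₁, m₂, h₂, rfl⟩
      have := ih hp m₁ h₁
      have := hq1 m₂ h₂
      rw [wt_add]
      omega

/-- exponent vector read as a function on `ℕ` -/
def Mfun (m : Fin n →₀ ℕ) : ℕ → ℕ := fun x => if h : x < n then m ⟨x, h⟩ else 0

/-- prefix sums of `Mfun` -/
def Sfun (m : Fin n →₀ ℕ) : ℕ → ℕ := fun x => ∑ k ∈ range x, Mfun m k

/-- number of integers in `[a, b)` congruent to `i` mod `s` -/
def cnt (s i a b : ℕ) : ℕ := ((Ico a b).filter (fun k => k % s = i)).card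

/-- the `i`-th piece of the decomposition of `m` into `s` covers -/
noncomputable def dvec (s i : ℕ) (m : Fin n →₀ ℕ) : Fin n →₀ ℕ :=
  Finsupp.equivFunOnFinite.symm (fun j => cnt s i (Sfun m j.val) (Sfun m (j.val + 1)))

lemma dvec_apply (s i : ℕ) (m : Fin n →₀ ℕ) (j : Fin n) :
    dvec s i m j = cnt s i (Sfun m j.val) (Sfun m (j.val + 1)) := rfl

lemma cnt_add {a b e : ℕ} (s i : ℕ) (hab : a ≤ b) (hbe : b ≤ e) :
    cnt s i a b + cnt s i b e = cnt s i a e := by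
  unfold cnt
  rw [← Finset.card_union_of_disjoint, ← Finset.filter_union,
    Finset.Ico_union_Ico_eq_Ico hab hbe]
  exact Finset.disjoint_filter_filter (Finset.Ico_disjoint_Ico_consecutive a b e)

lemma cnt_pos {s i a b : ℕ} (hi : i < s) (h : a + s ≤ b) : 0 < cnt s i a b := by
  rw [cnt, Finset.card_pos]
  have hq := Nat.div_add_mod a s
  have hr : a % s < s := Nat.mod_lt _ (by omega)
  by_cases hcase : a % s ≤ i
  · refine ⟨s * (a / s) + i, ?_⟩
    have hmod : (s * (a / s) + i) % s = i := by
      rw [Nat.mul_add_mod, Nat.mod_eq_of_lt hi]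
    simp only [Finset.mem_filter, Finset.mem_Ico]
    refine ⟨⟨by omega, by omega⟩, hmod⟩
  · refine ⟨s * (a / s) + (s + i), ?_⟩
    have hmod : (s * (a / s) + (s + i)) % s = i := by
      rw [Nat.mul_add_mod, Nat.add_mod_left, Nat.mod_eq_of_lt hi]
    simp only [Finset.mem_filter, Finset.mem_Ico]
    refine ⟨⟨by omega, by omega⟩, hmod⟩

lemma sum_cnt {s : ℕ} (hs : 0 < s) (a b : ℕ) : ∑ i ∈ range s, cnt s i a b = b - a := by
  have := Finset.card_eq_sum_card_fiberwise
    (f := fun k => k % s) (s := Ico a b) (t := range s)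
    (fun x _ => Finset.mem_range.2 (Nat.mod_lt _ hs))
  rw [Nat.card_Ico] at this
  simpa [cnt] using this.symm

lemma Sfun_mono (m : Fin n →₀ ℕ) : Monotone (Sfun m) := by
  intro a b hab
  exact Finset.sum_le_sum_of_subset (Finset.range_subset_range.2 hab)

lemma Sfun_succ (m : Fin n →₀ ℕ) (x : ℕ) : Sfun m (x + 1) = Sfun m x + Mfun m x :=
  Finset.sum_range_succ _ _

lemma sum_dvec {s : ℕ} (hs : 0 < s) (m : Fin n →₀ ℕ) :
    ∑ i ∈ range s, dvec s i m = m := by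
  ext j
  rw [Finset.sum_apply']
  simp only [dvec_apply]
  rw [sum_cnt hs, Sfun_succ]
  have : Mfun m j.val = m j := by simp [Mfun, j.isLt]
  omega

lemma wt_eq_Ico {a : ℕ} (ha : a + t ≤ n) (m : Fin n →₀ ℕ) :
    wt t a m = ∑ k ∈ Ico a (a + t), Mfun m k := by
  rw [wt, Finset.sum_filter]
  have h1 : ∀ j : Fin n, (if a ≤ j.val ∧ j.val < a + t then m j else 0)
      = (fun k => if a ≤ k ∧ k < a + t then Mfun m k else 0) j.val := by
    intro j; simp only [Mfun, j.isLt, dif_pos]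
  rw [Finset.sum_congr rfl (fun j _ => h1 j),
    Fin.sum_univ_eq_sum_range (fun k => if a ≤ k ∧ k < a + t then Mfun m k else 0),
    ← Finset.sum_filter]
  congr 1
  ext k
  simp only [Finset.mem_filter, Finset.mem_range, Finset.mem_Ico]
  omega

lemma cnt_self (s i a : ℕ) : cnt s i a a = 0 := by simp [cnt]

lemma tele (s i : ℕ) (m : Fin n →₀ ℕ) (v u : ℕ) :
    ∑ k ∈ Ico u (u + v), cnt s i (Sfun m k) (Sfun m (k + 1))
      = cnt s i (Sfun m u) (Sfun m (u + v)) := by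
  induction v with
  | zero => simp [cnt_self]
  | succ v ih =>
      rw [← add_assoc, Finset.sum_Ico_succ_top (Nat.le_add_right u v), ih,
        cnt_add s i (Sfun_mono m (Nat.le_add_right u v))
          (Sfun_mono m (Nat.le_succ (u + v)))]

lemma wt_eq_S {a : ℕ} (ha : a + t ≤ n) (m : Fin n →₀ ℕ) :
    Sfun m a + wt t a m = Sfun m (a + t) := by
  rw [wt_eq_Ico ha]
  have h := Finset.sum_Ico_consecutive (Mfun m) (Nat.zero_le a) (Nat.le_add_right a t)
  have e : ∀ x, Sfun m x = ∑ k ∈ Ico 0 x, Mfun m k := fun x => by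
    rw [Sfun, Finset.range_eq_Ico]
  rw [e, e]
  exact h

lemma wt_dvec {s i a : ℕ} (ha : a + t ≤ n) (m : Fin n →₀ ℕ) :
    wt t a (dvec s i m) = cnt s i (Sfun m a) (Sfun m (a + t)) := by
  rw [wt_eq_Ico ha]
  have hcongr : ∀ k ∈ Ico a (a + t),
      Mfun (dvec s i m) k = cnt s i (Sfun m k) (Sfun m (k + 1)) := by
    intro k hk
    have hkn : k < n := lt_of_lt_of_le (Finset.mem_Ico.1 hk).2 ha
    simp [Mfun, hkn, dvec]
  rw [Finset.sum_congr rfl hcongr]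
  exact tele s i m t a

lemma wt_dvec_pos {s i a : ℕ} (hi : i < s) (ha : a + t ≤ n) (m : Fin n →₀ ℕ)
    (hw : s ≤ wt t a m) : 0 < wt t a (dvec s i m) := by
  rw [wt_dvec ha]
  exact cnt_pos hi (by have := wt_eq_S ha m; omega)

lemma monomial_mem_span {a : ℕ} (d : Fin n →₀ ℕ) (hd : 0 < wt t a d) :
    (monomial d 1 : MvPolynomial (Fin n) K) ∈
      Ideal.span {p : MvPolynomial (Fin n) K |
        ∃ j : Fin n, a ≤ j.val ∧ j.val < a + t ∧ p = X j} := by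
  obtain ⟨j, hj, hdj⟩ : ∃ j ∈ univ.filter (fun j : Fin n => a ≤ j.val ∧ j.val < a + t),
      0 < d j := by
    by_contra hcon
    push_neg at hcon
    have : wt t a d = 0 := Finset.sum_eq_zero (fun j hj => Nat.le_zero.1 (hcon j hj))
    omega
  simp only [Finset.mem_filter, Finset.mem_univ, true_and] at hj
  have hd' : d - Finsupp.single j 1 + Finsupp.single j 1 = d := by
    ext k
    rcases eq_or_ne k j with rfl | hk
    · simp only [Finsupp.add_apply, Finsupp.tsub_apply, Finsupp.single_apply, if_pos rfl,
        if_true]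
      omega
    · simp [Finsupp.single_apply, Finsupp.tsub_apply, Ne.symm hk]
  have hrepr : (monomial d 1 : MvPolynomial (Fin n) K)
      = monomial (d - Finsupp.single j 1) 1 * X j := by
    conv_lhs => rw [← hd']
    rw [monomial_add_single, pow_one]
  rw [hrepr]
  exact Ideal.mul_mem_left _ _ (Ideal.subset_span ⟨j, hj.1, hj.2, rfl⟩)

lemma prod_monomial (F : Finset ℕ) (g : ℕ → (Fin n →₀ ℕ)) :
    (∏ i ∈ F, (monomial (g i) 1 : MvPolynomial (Fin n) K))
      = monomial (∑ i ∈ F, g i) 1 := by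
  induction F using Finset.cons_induction with
  | empty => simp
  | cons a F ha ih => rw [Finset.prod_cons, Finset.sum_cons, ih, monomial_mul, mul_one]

lemma prod_mem_pow' {R : Type*} [CommRing R] (I : Ideal R) (F : Finset ℕ) (x : ℕ → R)
    (h : ∀ i ∈ F, x i ∈ I) : ∏ i ∈ F, x i ∈ I ^ F.card := by
  induction F using Finset.cons_induction with
  | empty => simp [Ideal.one_eq_top]
  | cons a F ha ih =>
      rw [Finset.prod_cons, Finset.card_cons, pow_succ, mul_comm (I ^ F.card) I]
      exact Ideal.mul_mem_mul (h a (Finset.mem_cons_self a F))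
        (ih (fun i hi => h i (Finset.mem_cons_of_mem hi)))

end PathCoverAux

/-- For `t ≥ 2` and `n ≥ t`, the cover ideal
`J_t(P_n) = ∩_{a=0}^{n-t} ⟨x_{a+1}, …, x_{a+t}⟩` of the `t`-connected ideal of
the path `P_n` satisfies `J_t(P_n)^{(s)} = J_t(P_n)^s` for all `s ≥ 1`, where
the symbolic power is the intersection of the `s`-th powers of the primes. -/
theorem path_cover_ideal_symbolic_eq_ordinary {K : Type*} [Field K] {t n : ℕ}
    (ht : 2 ≤ t) (hn : t ≤ n) (s : ℕ) (hs : 1 ≤ s) :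
    (⨅ a ∈ Finset.range (n - t + 1),
        (Ideal.span {p : MvPolynomial (Fin n) K |
            ∃ j : Fin n, a ≤ j.val ∧ j.val < a + t ∧ p = X j}) ^ s) =
    (⨅ a ∈ Finset.range (n - t + 1),
        Ideal.span {p : MvPolynomial (Fin n) K |
            ∃ j : Fin n, a ≤ j.val ∧ j.val < a + t ∧ p = X j}) ^ s := by
  set P : ℕ → Ideal (MvPolynomial (Fin n) K) := fun a =>
    Ideal.span {p : MvPolynomial (Fin n) K |
      ∃ j : Fin n, a ≤ j.val ∧ j.val < a + t ∧ p = X j} with hP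
  set J : Ideal (MvPolynomial (Fin n) K) := ⨅ a ∈ Finset.range (n - t + 1), P a with hJ
  apply le_antisymm
  · -- hard direction
    intro p hp
    have hmem : ∀ a ∈ Finset.range (n - t + 1), p ∈ (P a) ^ s := by
      intro a ha
      exact (Submodule.mem_iInf _).1 ((Submodule.mem_iInf _).1 hp a) ha
    have hwt : ∀ m ∈ p.support, ∀ a ∈ Finset.range (n - t + 1), s ≤ wt t a m :=
      fun m hm a ha => pow_le_V t a s (hmem a ha) m hm
    rw [← support_sum_monomial_coeff p]
    refine Submodule.sum_mem _ (fun m hm => ?_)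
    have key : (monomial m 1 : MvPolynomial (Fin n) K) ∈ J ^ s := by
      have hdec : (monomial m 1 : MvPolynomial (Fin n) K)
          = ∏ i ∈ Finset.range s, monomial (dvec s i m) 1 := by
        rw [prod_monomial, sum_dvec hs m]
      rw [hdec]
      have := prod_mem_pow' J (Finset.range s) (fun i => (monomial (dvec s i m) 1)) ?_
      · simpa using this
      · intro i hi
        rw [hJ]
        refine (Submodule.mem_iInf _).2 (fun a => (Submodule.mem_iInf _).2 (fun ha => ?_))
        have hat : a + t ≤ n := by
          have := Finset.mem_range.1 ha; omega
        exact monomial_mem_span _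
          (wt_dvec_pos (Finset.mem_range.1 hi) hat m (hwt m hm a ha))
    have : (monomial m (coeff m p) : MvPolynomial (Fin n) K)
        = C (coeff m p) * monomial m 1 := by
      rw [C_mul_monomial, mul_one]
    rw [this]
    exact Ideal.mul_mem_left _ _ key
  · -- easy direction
    refine le_iInf (fun a => le_iInf (fun ha => ?_))
    have hle : J ≤ P a := iInf_le_of_le a (iInf_le _ ha)
    exact Ideal.pow_right_mono hle s
end

section
/- The cover ideal J_3(C_6) = ∩_{i=1}^{6} ⟨x_i, x_{i+1}, x_{i+2}⟩ (indices mod 6) in K[x_1,…,x_6] satisfies J_3(C_6)^{(s)} = J_3(C_6)^s for all s ≥ 1, where J_3(C_6)^{(s)} = ∩_{i=1}^{6} ⟨x_i, x_{i+1}, x_{i+2}⟩^s. -/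
/-!
A monomial of `⨅ i, ⟨x_i, x_{i+1}, x_{i+2}⟩ ^ s` has total degree at least `s` on every window
`{i, i+1, i+2}`, and since this symbolic power is a monomial ideal it suffices to put each such
monomial `x^a` into `J ^ s` (`J = J_3(C_6)`), by induction on `s`. If both `x_i` and `x_{i+3}`
divide `x^a`, split off `x_i x_{i+3} ∈ J`, which meets every window exactly once. Otherwise at
most one of each antipodal pair of exponents is nonzero, and the six window inequalities force an
alternating triple `{c, c+2, c+4}` with all exponents at least `s`; then
`(x_c x_{c+2} x_{c+4}) ^ s ∈ J ^ s` divides `x^a`.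
-/

open MvPolynomial Finset

namespace Finsupp

variable {σ : Type*}

theorem exists_eq_indicator_add {S : Finset σ} {n : ℕ} {a : σ →₀ ℕ} (ha : ∀ j ∈ S, n ≤ a j) :
    ∃ b, a = indicator S (fun _ _ => n) + b := by
  classical
  refine le_iff_exists_add.mp fun j => ?_
  rw [indicator_apply]
  split_ifs with hj
  · exact ha j hj
  · exact Nat.zero_le _

theorem sum_indicator_one_add_apply [DecidableEq σ] (S W : Finset σ) (b : σ →₀ ℕ) :
    ∑ j ∈ W, (indicator S (fun _ _ => 1) + b : σ →₀ ℕ) j = #(W ∩ S) + ∑ j ∈ W, b j := by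
  simp [indicator_apply, sum_add_distrib]

end Finsupp

namespace MvPolynomial

variable {σ R : Type*} [CommSemiring R]

theorem mem_ideal_of_forall_monomial_mem {I : Ideal (MvPolynomial σ R)} {p : MvPolynomial σ R}
    (h : ∀ m ∈ p.support, monomial m (1 : R) ∈ I) : p ∈ I := by
  rw [p.as_sum]
  refine Ideal.sum_mem _ fun m hm => ?_
  rw [← mul_one (coeff m p), ← smul_eq_mul, ← smul_monomial]
  exact Submodule.smul_of_tower_mem _ _ (h m hm)

theorem le_sum_of_mem_span_X_pow {s : Finset σ} {t : ℕ} {p : MvPolynomial σ R}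
    (hp : p ∈ Ideal.span (X '' ↑s) ^ t) : ∀ m ∈ p.support, t ≤ ∑ j ∈ s, m j := by
  classical
  induction t generalizing p with
  | zero => exact fun _ _ => Nat.zero_le _
  | succ t ih =>
    rw [pow_succ] at hp
    refine Submodule.mul_induction_on hp (fun q hq r hr m hm => ?_) (fun q r hq hr m hm => ?_)
    · obtain ⟨m₁, hm₁, m₂, hm₂, rfl⟩ := Finset.mem_add.mp (support_mul q r hm)
      obtain ⟨j, hj, hj0⟩ := mem_ideal_span_X_image.mp hr m₂ hm₂
      have h₁ := ih hq m₁ hm₁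
      have h₂ := single_le_sum (f := fun j => m₂ j) (fun _ _ => Nat.zero_le _) hj
      simp only [Finsupp.coe_add, Pi.add_apply, sum_add_distrib]
      omega
    · exact (mem_union.mp (support_add hm)).elim (hq m) (hr m)

theorem prod_X_mem_iInf_span_X {ι : Type*} {W : ι → Set σ} {S : Finset σ}
    (hS : ∀ k, ∃ j ∈ S, j ∈ W k) :
    ∏ j ∈ S, X j ∈ ⨅ k, Ideal.span (X '' W k : Set (MvPolynomial σ R)) := by
  refine Ideal.mem_iInf.mpr fun k => ?_
  obtain ⟨j, hjS, hjW⟩ := hS k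
  exact Ideal.prod_mem _ hjS (Ideal.subset_span (Set.mem_image_of_mem X hjW))

theorem monomial_indicator_add (S : Finset σ) (n : ℕ) (b : σ →₀ ℕ) :
    monomial (Finsupp.indicator S (fun _ _ => n) + b) (1 : R) =
      (∏ j ∈ S, X j) ^ n * monomial b 1 := by
  rw [← prod_pow, prod_X_pow, monomial_mul, mul_one]

end MvPolynomial

namespace CycleSix

def window (i : ZMod 6) : Finset (ZMod 6) := {i, i + 1, i + 2}

noncomputable def coverIdeal (K : Type*) [CommSemiring K] : Ideal (MvPolynomial (ZMod 6) K) :=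
  ⨅ i, Ideal.span (X '' ↑(window i))

theorem sum_window (f : ZMod 6 → ℕ) (i : ZMod 6) :
    ∑ j ∈ window i, f j = f i + f (i + 1) + f (i + 2) := by
  have h : i ∉ ({i + 1, i + 2} : Finset (ZMod 6)) ∧ i + 1 ≠ i + 2 := by revert i; decide
  rw [window, sum_insert h.1, sum_pair h.2, add_assoc]

theorem card_window_inter_antipodal (i k : ZMod 6) : #(window k ∩ {i, i + 3}) = 1 := by
  revert i k; decide

theorem antipodal_meets_window (i k : ZMod 6) :
    ∃ j ∈ ({i, i + 3} : Finset (ZMod 6)), j ∈ window k := by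
  revert i k; decide

theorem alternate_meets_window (c k : ZMod 6) :
    ∃ j ∈ ({c, c + 2, c + 4} : Finset (ZMod 6)), j ∈ window k := by
  revert c k; decide

theorem exists_alternate_le (f : ZMod 6 → ℕ) (t : ℕ) (hw : ∀ i, t ≤ f i + f (i + 1) + f (i + 2))
    (hp : ∀ i, f i = 0 ∨ f (i + 3) = 0) :
    ∃ c, ∀ j ∈ ({c, c + 2, c + 4} : Finset (ZMod 6)), t ≤ f j := by
  have h0 := hw 0; have h1 := hw 1; have h2 := hw 2; have h3 := hw 3; have h4 := hw 4
  have h5 := hw 5; have p0 := hp 0; have p1 := hp 1; have p2 := hp 2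
  reduce_mod_char at h0 h1 h2 h3 h4 h5 p0 p1 p2
  by_cases heven : t ≤ f 0 ∧ t ≤ f 2 ∧ t ≤ f 4
  · refine ⟨0, ?_⟩
    reduce_mod_char
    simpa using heven
  · refine ⟨1, ?_⟩
    reduce_mod_char
    simp only [mem_insert, mem_singleton, forall_eq_or_imp, forall_eq]
    omega

variable {K : Type*} [CommSemiring K]

theorem monomial_mem_coverIdeal_pow (t : ℕ) (a : ZMod 6 →₀ ℕ)
    (ha : ∀ i, t ≤ ∑ j ∈ window i, a j) : monomial a (1 : K) ∈ coverIdeal K ^ t := by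
  induction t generalizing a with
  | zero => simp
  | succ t ih =>
    by_cases hpair : ∃ i, a i ≠ 0 ∧ a (i + 3) ≠ 0
    · obtain ⟨i, hi, hi3⟩ := hpair
      obtain ⟨b, rfl⟩ := Finsupp.exists_eq_indicator_add (S := {i, i + 3}) (n := 1) (a := a) <| by
        simp only [mem_insert, mem_singleton, forall_eq_or_imp, forall_eq]
        omega
      rw [monomial_indicator_add, pow_one, pow_succ']
      refine Ideal.mul_mem_mul (prod_X_mem_iInf_span_X (antipodal_meets_window i)) (ih b fun k => ?_)
      have hk := ha k
      rw [Finsupp.sum_indicator_one_add_apply, card_window_inter_antipodal] at hk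
      omega
    · push Not at hpair
      obtain ⟨c, hc⟩ := exists_alternate_le a (t + 1) (fun i => sum_window a i ▸ ha i)
        fun i => or_iff_not_imp_left.mpr (hpair i)
      obtain ⟨b, rfl⟩ := Finsupp.exists_eq_indicator_add hc
      rw [monomial_indicator_add]
      exact Ideal.mul_mem_right _ _
        (Ideal.pow_mem_pow (prod_X_mem_iInf_span_X (alternate_meets_window c)) _)

end CycleSix

open CycleSix in
theorem J3C6_symbolic_eq_ordinary_general {K : Type*} [Field K] (s : ℕ) :
    (⨅ i : ZMod 6,
        (Ideal.span {X i, X (i + 1), X (i + 2)} : Ideal (MvPolynomial (ZMod 6) K)) ^ s) =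
    (⨅ i : ZMod 6,
        (Ideal.span {X i, X (i + 1), X (i + 2)} : Ideal (MvPolynomial (ZMod 6) K))) ^ s := by
  have hwindow (i : ZMod 6) : Ideal.span {X i, X (i + 1), X (i + 2)} =
      (Ideal.span (X '' ↑(window i)) : Ideal (MvPolynomial (ZMod 6) K)) := by
    simp [window, Set.image_insert_eq]
  simp_rw [hwindow]
  refine le_antisymm (fun p hp => mem_ideal_of_forall_monomial_mem fun m hm => ?_)
    (le_iInf fun i => Ideal.pow_right_mono (iInf_le _ i) s)
  exact monomial_mem_coverIdeal_pow s m fun i =>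
    le_sum_of_mem_span_X_pow (Ideal.mem_iInf.mp hp i) m hm

/-- The cover ideal `J_3(C_6) = ∩_{i} ⟨x_i, x_{i+1}, x_{i+2}⟩` (indices mod 6) in
`K[x_1, …, x_6]` satisfies `J_3(C_6)^{(s)} = J_3(C_6)^s` for all `s ≥ 1`. -/
theorem J3C6_symbolic_eq_ordinary {K : Type*} [Field K] (s : ℕ) (hs : 1 ≤ s) :
    (⨅ i : ZMod 6,
        (Ideal.span {X i, X (i + 1), X (i + 2)} : Ideal (MvPolynomial (ZMod 6) K)) ^ s) =
    (⨅ i : ZMod 6,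
        (Ideal.span {X i, X (i + 1), X (i + 2)} : Ideal (MvPolynomial (ZMod 6) K))) ^ s :=
  J3C6_symbolic_eq_ordinary_general s
end

section
/- The cover ideal J_4(C_8) = ∩_{i=1}^{8} ⟨x_i, x_{i+1}, x_{i+2}, x_{i+3}⟩ (indices mod 8) in K[x_1,…,x_8] satisfies J_4(C_8)^{(s)} = J_4(C_8)^s for all s ≥ 1. -/
open MvPolynomial

namespace J4C8aux
/-- window sum of an exponent vector -/
def w (a : ZMod 8 →₀ ℕ) (i : ZMod 8) : ℕ := a i + a (i + 1) + a (i + 2) + a (i + 3)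

lemma w_add (x y : ZMod 8 →₀ ℕ) (i : ZMod 8) : w (x + y) i = w x i + w y i := by
  simp [w]; ring

def cv2 : ZMod 8 → ℕ := fun e => if e = 0 ∨ e = 4 then 1 else 0
def cv3 : ZMod 8 → ℕ := fun e => if e = 0 ∨ e = 3 ∨ e = 6 then 1 else 0
def wv3 : ZMod 8 → ℕ := fun d => if d = 0 ∨ d = 3 ∨ d = 5 ∨ d = 6 then 2 else 1

lemma hck2 (j : ZMod 8) : ∀ e : ZMod 8,
    (Finsupp.single j 1 + Finsupp.single (j+4) 1 : ZMod 8 →₀ ℕ) (j + e) = cv2 e := by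
  intro e
  simp only [Finsupp.add_apply, Finsupp.single_apply, left_eq_add, add_right_inj]
  revert e; decide

lemma hck3 (j : ZMod 8) : ∀ e : ZMod 8,
    (Finsupp.single j 1 + Finsupp.single (j+3) 1 + Finsupp.single (j+6) 1 : ZMod 8 →₀ ℕ)
      (j + e) = cv3 e := by
  intro e
  simp only [Finsupp.add_apply, Finsupp.single_apply, left_eq_add, add_right_inj]
  revert e; decide

lemma w_pair (j : ZMod 8) : ∀ d : ZMod 8,
    w (Finsupp.single j 1 + Finsupp.single (j+4) 1) (j + d) = 1 := by
  intro d
  have h1 : j + d + 1 = j + (d + 1) := by ring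
  have h2 : j + d + 2 = j + (d + 2) := by ring
  have h3 : j + d + 3 = j + (d + 3) := by ring
  rw [w, h1, h2, h3, hck2, hck2, hck2, hck2]
  clear h1 h2 h3
  revert d; decide

lemma w_triple (j : ZMod 8) : ∀ d : ZMod 8,
    w (Finsupp.single j 1 + Finsupp.single (j+3) 1 + Finsupp.single (j+6) 1) (j + d) = wv3 d := by
  intro d
  have h1 : j + d + 1 = j + (d + 1) := by ring
  have h2 : j + d + 2 = j + (d + 2) := by ring
  have h3 : j + d + 3 = j + (d + 3) := by ring
  rw [w, h1, h2, h3, hck3, hck3, hck3, hck3]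
  clear h1 h2 h3
  revert d; decide

set_option maxRecDepth 10000 in
/-- classification of antipodal-free covers of the 4-window hypergraph on `ZMod 8`. -/
lemma CLS : ∀ S : ZMod 8 → Bool,
    (∀ i, (S i || S (i+1) || S (i+2) || S (i+3)) = true) →
    (∀ j, ¬(S j = true ∧ S (j+4) = true)) →
    ∃ j, S j = true ∧ S (j+3) = true ∧ S (j+6) = true ∧
      S (j+1) = false ∧ S (j+2) = false ∧ S (j+4) = false ∧ S (j+7) = false := by decide

/-- the key combinatorial step: from a vector with all windows `≥ s+1`, split off a
"cover" `c` leaving all windows `≥ s`. -/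
lemma step (s : ℕ) (a : ZMod 8 →₀ ℕ) (h : ∀ i, s + 1 ≤ w a i) :
    ∃ c : ZMod 8 →₀ ℕ, (∀ k, c k ≤ a k) ∧ (∀ i, 1 ≤ w c i) ∧ (∀ i, w c i + s ≤ w a i) := by
  by_cases hpair : ∃ j, a j ≠ 0 ∧ a (j + 4) ≠ 0
  · obtain ⟨j, hj, hj4⟩ := hpair
    refine ⟨Finsupp.single j 1 + Finsupp.single (j+4) 1, ?_, ?_, ?_⟩
    · intro k
      obtain ⟨e, rfl⟩ : ∃ e, k = j + e := ⟨k - j, by ring⟩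
      rw [hck2]
      by_cases he : e = 0 ∨ e = 4
      · rcases he with rfl | rfl
        · rw [(by decide : cv2 0 = 1), add_zero]; omega
        · rw [(by decide : cv2 4 = 1)]; omega
      · unfold cv2; rw [if_neg he]; exact Nat.zero_le _
    · intro i
      obtain ⟨d, rfl⟩ : ∃ d, i = j + d := ⟨i - j, by ring⟩
      rw [w_pair]
    · intro i
      obtain ⟨d, rfl⟩ : ∃ d, i = j + d := ⟨i - j, by ring⟩
      rw [w_pair]
      have := h (j + d); omega
  · -- no antipodal pair in the support
    have h2' : ∀ k, ¬((a k != 0) = true ∧ (a (k+4) != 0) = true) := by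
      intro k hk
      exact hpair ⟨k, bne_iff_ne.1 hk.1, bne_iff_ne.1 hk.2⟩
    have h1' : ∀ i, ((a i != 0) || (a (i+1) != 0) || (a (i+2) != 0) || (a (i+3) != 0)) = true := by
      intro i
      have := h i
      simp only [w] at this
      simp only [Bool.or_eq_true, bne_iff_ne, ne_eq]
      omega
    obtain ⟨j, hj0, hj3, hj6, hf1, hf2, hf4, hf7⟩ := CLS (fun k => a k != 0) h1' h2'
    rw [bne_iff_ne] at hj0 hj3 hj6
    rw [bne_eq_false_iff_eq] at hf1 hf2 hf4 hf7
    -- tight windows give large values at j and j+3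
    have haj : s + 1 ≤ a j := by
      have h7 := h (j + 7)
      simp only [w] at h7
      rw [(by rw [add_assoc]; norm_num : j + 7 + 1 = j + 8),
          (by rw [add_assoc]; norm_num : j + 7 + 2 = j + 9),
          (by rw [add_assoc]; norm_num : j + 7 + 3 = j + 10),
          (by decide : (8 : ZMod 8) = 0), (by decide : (9 : ZMod 8) = 1),
          (by decide : (10 : ZMod 8) = 2), add_zero] at h7
      omega
    have haj3 : s + 1 ≤ a (j + 3) := by
      have h1 := h (j + 1)
      simp only [w] at h1
      rw [(by ring : j + 1 + 1 = j + 2), (by ring : j + 1 + 2 = j + 3),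
          (by ring : j + 1 + 3 = j + 4)] at h1
      omega
    refine ⟨Finsupp.single j 1 + Finsupp.single (j+3) 1 + Finsupp.single (j+6) 1, ?_, ?_, ?_⟩
    · intro k
      obtain ⟨e, rfl⟩ : ∃ e, k = j + e := ⟨k - j, by ring⟩
      rw [hck3]
      by_cases he : e = 0 ∨ e = 3 ∨ e = 6
      · rcases he with rfl | rfl | rfl
        · rw [(by decide : cv3 0 = 1), add_zero]; omega
        · rw [(by decide : cv3 3 = 1)]; omega
        · rw [(by decide : cv3 6 = 1)]; omega
      · unfold cv3; rw [if_neg he]; exact Nat.zero_le _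
    · intro i
      obtain ⟨d, rfl⟩ : ∃ d, i = j + d := ⟨i - j, by ring⟩
      rw [w_triple]
      unfold wv3
      split <;> norm_num
    · intro i
      obtain ⟨d, rfl⟩ : ∃ d, i = j + d := ⟨i - j, by ring⟩
      rw [w_triple]
      by_cases hd : d = 0 ∨ d = 3 ∨ d = 5 ∨ d = 6
      · rcases hd with rfl | rfl | rfl | rfl
        · rw [(by decide : wv3 0 = 2), add_zero]
          simp only [w]
          omega
        · rw [(by decide : wv3 3 = 2)]
          simp only [w]
          rw [(by ring : j + 3 + 1 = j + 4), (by ring : j + 3 + 2 = j + 5),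
              (by ring : j + 3 + 3 = j + 6)]
          omega
        · rw [(by decide : wv3 5 = 2)]
          simp only [w]
          rw [(by ring : j + 5 + 1 = j + 6), (by ring : j + 5 + 2 = j + 7),
              (by rw [add_assoc]; norm_num : j + 5 + 3 = j + 8),
              (by decide : (8 : ZMod 8) = 0), add_zero]
          omega
        · rw [(by decide : wv3 6 = 2)]
          simp only [w]
          rw [(by ring : j + 6 + 1 = j + 7),
              (by rw [add_assoc]; norm_num : j + 6 + 2 = j + 8),
              (by rw [add_assoc]; norm_num : j + 6 + 3 = j + 9),
              (by decide : (8 : ZMod 8) = 0), (by decide : (9 : ZMod 8) = 1), add_zero]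
          omega
      · unfold wv3; rw [if_neg hd]
        have := h (j + d); omega

variable {K : Type*} [Field K]

/-- elements of `P i` have all monomials of window-i weight ≥ 1. -/
lemma base (i : ZMod 8) {p : MvPolynomial (ZMod 8) K}
    (hp : p ∈ Ideal.span {X i, X (i+1), X (i+2), X (i+3)}) :
    ∀ m ∈ p.support, 1 ≤ w m i := by
  refine Submodule.span_induction ?_ ?_ ?_ ?_ hp
  · rintro x hx m hm
    simp only [Set.mem_insert_iff, Set.mem_singleton_iff] at hx
    have key : ∀ k, (k = i ∨ k = i+1 ∨ k = i+2 ∨ k = i+3) → x = X k → 1 ≤ w m i := by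
      rintro k hk rfl
      rw [support_X, Finset.mem_singleton] at hm
      subst hm
      have h1 : (Finsupp.single k (1:ℕ)) k = 1 := Finsupp.single_eq_same
      rcases hk with rfl | rfl | rfl | rfl <;> · simp only [w, h1]; omega
    rcases hx with rfl | rfl | rfl | rfl
    · exact key i (Or.inl rfl) rfl
    · exact key (i+1) (Or.inr (Or.inl rfl)) rfl
    · exact key (i+2) (Or.inr (Or.inr (Or.inl rfl))) rfl
    · exact key (i+3) (Or.inr (Or.inr (Or.inr rfl))) rfl
  · intro m hm; simp at hm
  · intro x y hx hy ihx ihy m hm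
    rcases Finset.mem_union.1 (support_add hm) with h | h
    · exact ihx m h
    · exact ihy m h
  · intro r x hx ih m hm
    rw [smul_eq_mul] at hm
    rcases Finset.mem_add.1 (support_mul r x hm) with ⟨mr, hmr, mx, hmx, rfl⟩
    have := ih mx hmx
    rw [w_add]; omega

/-- elements of `P i ^ s` have all monomials of window-i weight ≥ s. -/
lemma powmem (i : ZMod 8) (s : ℕ) {p : MvPolynomial (ZMod 8) K}
    (hp : p ∈ (Ideal.span {X i, X (i+1), X (i+2), X (i+3)} : Ideal (MvPolynomial (ZMod 8) K)) ^ s) :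
    ∀ m ∈ p.support, s ≤ w m i := by
  induction s generalizing p with
  | zero => intro m hm; exact Nat.zero_le _
  | succ s ih =>
    rw [pow_succ] at hp
    refine Submodule.mul_induction_on hp ?_ ?_
    · intro x hx y hy m hm
      rcases Finset.mem_add.1 (support_mul x y hm) with ⟨mx, hmx, my, hmy, rfl⟩
      have h1 := ih hx mx hmx
      have h2 := base i hy my hmy
      rw [w_add]; omega
    · intro x y ihx ihy m hm
      rcases Finset.mem_union.1 (support_add hm) with h | h
      · exact ihx m h
      · exact ihy m h

/-- a monomial with positive window-i weight lies in `P i`. -/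
lemma mono_mem_P (i : ZMod 8) {a : ZMod 8 →₀ ℕ} (h : 1 ≤ w a i) :
    (monomial a (1:K)) ∈ Ideal.span {X i, X (i+1), X (i+2), X (i+3)} := by
  have hX : ∀ k, (k = i ∨ k = i+1 ∨ k = i+2 ∨ k = i+3) → a k ≠ 0 →
      (monomial a (1:K)) ∈ Ideal.span {X i, X (i+1), X (i+2), X (i+3)} := by
    intro k hk hak
    have hXk : (X k : MvPolynomial (ZMod 8) K) ∈
        Ideal.span {X i, X (i+1), X (i+2), X (i+3)} := by
      apply Ideal.subset_span
      rcases hk with rfl | rfl | rfl | rfl <;> simp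
    have h' : (a - Finsupp.single k 1) + Finsupp.single k 1 = a := by
      ext j
      rw [Finsupp.add_apply, Finsupp.tsub_apply, Finsupp.single_apply]
      by_cases hj : k = j
      · subst hj; simp only [if_true, eq_self_iff_true]; omega
      · simp [hj]
    have heq : (monomial a (1:K)) = monomial (a - Finsupp.single k 1) 1 * X k := by
      rw [X, monomial_mul, one_mul, h']
    rw [heq]
    exact Ideal.mul_mem_left _ _ hXk
  unfold w at h
  have : a i ≠ 0 ∨ a (i+1) ≠ 0 ∨ a (i+2) ≠ 0 ∨ a (i+3) ≠ 0 := by omega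
  rcases this with h' | h' | h' | h'
  · exact hX i (Or.inl rfl) h'
  · exact hX (i+1) (Or.inr (Or.inl rfl)) h'
  · exact hX (i+2) (Or.inr (Or.inr (Or.inl rfl))) h'
  · exact hX (i+3) (Or.inr (Or.inr (Or.inr rfl))) h'




/-- monomials with all windows `≥ s` lie in the `s`-th power of the cover ideal. -/
lemma key (s : ℕ) (a : ZMod 8 →₀ ℕ) (h : ∀ i, s ≤ w a i) :
    (monomial a (1:K)) ∈
      (⨅ i : ZMod 8,
        (Ideal.span {X i, X (i + 1), X (i + 2), X (i + 3)} :
          Ideal (MvPolynomial (ZMod 8) K))) ^ s := by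
  induction s generalizing a with
  | zero => rw [pow_zero, Ideal.one_eq_top]; exact Submodule.mem_top
  | succ s ih =>
    obtain ⟨c, hca, h1, h2⟩ := step s a h
    have hsub : ∀ i, s ≤ w (a - c) i := by
      intro i
      have hw := h2 i
      have g0 := hca i; have g1 := hca (i+1); have g2 := hca (i+2); have g3 := hca (i+3)
      simp only [w, Finsupp.tsub_apply] at *
      omega
    have h' : (a - c) + c = a := by
      ext k
      rw [Finsupp.add_apply, Finsupp.tsub_apply]
      have := hca k; omega
    have heq : (monomial a (1:K)) = monomial (a - c) 1 * monomial c 1 := by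
      rw [monomial_mul, one_mul, h']
    rw [heq, pow_succ]
    exact Ideal.mul_mem_mul (ih (a - c) hsub)
      ((Submodule.mem_iInf _).2 fun i => mono_mem_P i (h1 i))

end J4C8aux

open J4C8aux in
/-- The cover ideal `J_4(C_8) = ∩_{i} ⟨x_i, x_{i+1}, x_{i+2}, x_{i+3}⟩` (indices
mod 8) in `K[x_1, …, x_8]` satisfies `J_4(C_8)^{(s)} = J_4(C_8)^s` for all `s ≥ 1`. -/
theorem J4C8_symbolic_eq_ordinary {K : Type*} [Field K] (s : ℕ) (hs : 1 ≤ s) :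
    (⨅ i : ZMod 8,
        (Ideal.span {X i, X (i + 1), X (i + 2), X (i + 3)} : Ideal (MvPolynomial (ZMod 8) K)) ^ s) =
    (⨅ i : ZMod 8,
        (Ideal.span {X i, X (i + 1), X (i + 2), X (i + 3)} : Ideal (MvPolynomial (ZMod 8) K))) ^ s := by
  apply le_antisymm
  · intro f hf
    have hm : ∀ i : ZMod 8, ∀ m ∈ f.support, s ≤ w m i :=
      fun i => powmem i s ((Submodule.mem_iInf _).1 hf i)
    rw [f.as_sum]
    apply Ideal.sum_mem
    intro v hv
    have hcm : (monomial v) (coeff v f) = C (coeff v f) * monomial v 1 := by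
      rw [C_mul_monomial, mul_one]
    rw [hcm]
    exact Ideal.mul_mem_left _ _ (key s v fun i => hm i v hv)
  · exact le_iInf fun i => Ideal.pow_right_mono (iInf_le _ i) s
end

section
/- Let I ⊆ K[x_1,…,x_n] be a squarefree monomial ideal such that I^{(s)} = I^s for all s ≥ 1. Then I has the packing property: every ideal obtained from I by setting any subset of variables equal to 0 or 1 is König. -/
/-!
Let `E'` be the minor and `t = τ(E')`. Give the vertices of `Z` weight `0`, those of `O` weight
`t` and all others weight `1`. Every transversal `C` of `E` has weight at least `t`: either it
meets `O`, or `C \ Z` is a transversal of `E'`. Hence the monomial `x^w` lies in every `P_C^t`,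
i.e. in `I^{(t)} = I^t`, so it is divisible by a product of `t` edges of `E`. Since the weight
vanishes on `Z` and is `1` outside `Z ∪ O`, these edges avoid `Z` and their traces outside `O`
are pairwise disjoint: a matching of size `t` in `E'`.
-/

open MvPolynomial

/-- `C` is a transversal (vertex cover) of the hypergraph with edge set `E`. -/
def IsTransversal {V : Type*} [DecidableEq V] (E : Finset (Finset V)) (C : Finset V) : Prop :=
  ∀ e ∈ E, (e ∩ C).Nonempty

/-- `C` is a minimal transversal of `E`. -/
def IsMinTransversal {V : Type*} [DecidableEq V] (E : Finset (Finset V)) (C : Finset V) : Prop :=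
  IsTransversal E C ∧ ∀ D ⊂ C, ¬ IsTransversal E D

/-- The minimum size of a transversal of `E` (the height of the corresponding
squarefree monomial ideal). -/
noncomputable def tau {V : Type*} [DecidableEq V] (E : Finset (Finset V)) : ℕ :=
  sInf {c : ℕ | ∃ C : Finset V, C.card = c ∧ IsTransversal E C}

/-- The hypergraph `E` is König: it has a matching (pairwise disjoint edges, i.e. a
regular sequence of monomials in the associated ideal) of size equal to the minimum
transversal size (the height). -/
def IsKonig {V : Type*} [DecidableEq V] (E : Finset (Finset V)) : Prop :=
  ∃ M : Finset (Finset V), M ⊆ E ∧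
    ((M : Set (Finset V)).Pairwise fun a b => Disjoint a b) ∧ M.card = tau E

open Finset Function

namespace MvPolynomial

variable {σ R : Type*} [CommSemiring R]

theorem monomial_mem_span_X_image_pow_sum (C : Finset σ) (a : σ →₀ ℕ) :
    monomial a (1 : R) ∈ Ideal.span (X '' (C : Set σ)) ^ ∑ v ∈ C, a v := by
  classical
  have hsum : ∑ v ∈ a.support with v ∈ C, a v = ∑ v ∈ C, a v :=
    sum_subset (fun v hv => (mem_filter.1 hv).2) fun v _ hv => by simp_all
  have hC : ∏ v ∈ a.support with v ∈ C, (X v : MvPolynomial σ R) ^ a v ∈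
      Ideal.span (X '' (C : Set σ)) ^ ∑ v ∈ C, a v := by
    rw [← hsum, ← prod_pow_eq_pow_sum]
    exact Ideal.prod_mem_prod fun v hv =>
      Ideal.pow_mem_pow (Ideal.subset_span (Set.mem_image_of_mem X (mem_filter.1 hv).2)) _
  rw [← prod_X_pow_eq_monomial, ← prod_filter_mul_prod_filter_not a.support (· ∈ C)]
  exact Ideal.mul_mem_right _ _ hC

theorem span_monomial_image_pow (T : Set (σ →₀ ℕ)) (s : ℕ) :
    Ideal.span ((monomial · (1 : R)) '' T) ^ s =
      Ideal.span ((monomial · (1 : R)) ''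
        {b | ∃ g : Fin s → σ →₀ ℕ, (∀ i, g i ∈ T) ∧ ∑ i, g i = b}) := by
  rw [Ideal.span, Submodule.span_pow]
  congr 1
  ext p
  simp only [Set.mem_pow, List.prod_ofFn, Set.mem_image, Set.mem_ofPred_eq]
  constructor
  · rintro ⟨f, rfl⟩
    choose g hg hfg using fun i => (f i).2
    exact ⟨∑ i, g i, ⟨g, hg, rfl⟩, by simp_rw [monomial_sum_one, hfg]⟩
  · rintro ⟨-, ⟨g, hg, rfl⟩, rfl⟩
    exact ⟨fun i => ⟨_, g i, hg i, rfl⟩, (monomial_sum_one _ _).symm⟩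

theorem exists_sum_le_of_monomial_mem_span_pow [Nontrivial R] {T : Set (σ →₀ ℕ)} {s : ℕ}
    {a : σ →₀ ℕ} (h : monomial a (1 : R) ∈ Ideal.span ((monomial · (1 : R)) '' T) ^ s) :
    ∃ g : Fin s → σ →₀ ℕ, (∀ i, g i ∈ T) ∧ ∑ i, g i ≤ a := by
  classical
  rw [span_monomial_image_pow, mem_ideal_span_monomial_image] at h
  have ha : a ∈ (monomial a (1 : R)).support := by
    rw [support_monomial, if_neg one_ne_zero]
    exact mem_singleton_self a
  obtain ⟨-, ⟨g, hg, rfl⟩, hle⟩ := h a ha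
  exact ⟨g, hg, hle⟩

theorem exists_edges_of_monomial_mem_span_prod_X_pow [Nontrivial R] [DecidableEq σ]
    (E : Finset (Finset σ)) {s : ℕ} {a : σ →₀ ℕ}
    (h : monomial a (1 : R) ∈
      Ideal.span ((fun e : Finset σ => ∏ x ∈ e, (X x : MvPolynomial σ R)) '' E) ^ s) :
    ∃ f : Fin s → Finset σ, (∀ i, f i ∈ E) ∧ ∀ v, #{i | v ∈ f i} ≤ a v := by
  have hprod : (fun e : Finset σ => ∏ x ∈ e, (X x : MvPolynomial σ R)) =
      (monomial · (1 : R)) ∘ fun e => Finsupp.indicator e fun _ _ => 1 := by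
    ext1 e
    simpa using prod_X_pow (R := R) (fun _ => 1) e
  rw [hprod, Set.image_comp] at h
  obtain ⟨g, hg, hle⟩ := exists_sum_le_of_monomial_mem_span_pow h
  choose f hfE hfg using hg
  refine ⟨f, hfE, fun v => le_trans (le_of_eq ?_) (hle v)⟩
  simp_rw [← hfg, Finsupp.finsetSum_apply]
  simp [Finsupp.indicator_apply]

end MvPolynomial

section Hypergraph

variable {V : Type*} [DecidableEq V]

theorem tau_le_card {E : Finset (Finset V)} {C : Finset V} (hC : IsTransversal E C) :
    tau E ≤ #C :=
  Nat.sInf_le ⟨C, rfl, hC⟩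

theorem tau_eq_zero_of_empty_mem {E : Finset (Finset V)} (h : ∅ ∈ E) : tau E = 0 := by
  have hno : {c : ℕ | ∃ C : Finset V, #C = c ∧ IsTransversal E C} = ∅ :=
    Set.eq_empty_of_forall_notMem fun _ ⟨_, _, hC⟩ => by simpa using hC ∅ h
  rw [tau, hno, Nat.sInf_empty]

theorem isKonig_of_pairwise_disjoint {E : Finset (Finset V)} (f : Fin (tau E) → Finset V)
    (hf : ∀ i, f i ∈ E) (hne : ∀ i, (f i).Nonempty) (hdisj : Pairwise (Disjoint on f)) :
    IsKonig E := by
  have hinj : Injective f := fun i j hij => by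
    by_contra hne'
    have hdisj_ij : Disjoint (f i) (f j) := hdisj hne'
    rw [hij, disjoint_self] at hdisj_ij
    exact (hne j).ne_empty hdisj_ij
  refine ⟨univ.image f, image_subset_iff.2 fun i _ => hf i, ?_, ?_⟩
  · rintro _ hx _ hy hxy
    obtain ⟨i, -, rfl⟩ := mem_image.1 hx
    obtain ⟨j, -, rfl⟩ := mem_image.1 hy
    exact hdisj fun hij => hxy (congrArg f hij)
  · rw [card_image_of_injective _ hinj, card_univ, Fintype.card_fin]

/-- The minor of `E` obtained by setting the variables of `Z` to `0` and those of `O` to `1`. -/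
def minor (E : Finset (Finset V)) (Z O : Finset V) : Finset (Finset V) :=
  (E.filter fun e => e ∩ Z = ∅).image fun e => e \ O

noncomputable def minorWeight [Finite V] (Z O : Finset V) (t : ℕ) : V →₀ ℕ :=
  Finsupp.equivFunOnFinite.symm fun v => if v ∈ Z then 0 else if v ∈ O then t else 1

theorem minorWeight_apply [Finite V] (Z O : Finset V) (t : ℕ) (v : V) :
    minorWeight Z O t v = if v ∈ Z then 0 else if v ∈ O then t else 1 :=
  rfl

theorem tau_minor_le_sum_minorWeight [Finite V] {E : Finset (Finset V)} {Z O C : Finset V}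
    (hZO : Disjoint Z O) (hC : IsTransversal E C) :
    tau (minor E Z O) ≤ ∑ v ∈ C, minorWeight Z O (tau (minor E Z O)) v := by
  set t := tau (minor E Z O)
  by_cases hCO : ∃ v ∈ C, v ∈ O
  · obtain ⟨v, hvC, hvO⟩ := hCO
    calc t = minorWeight Z O t v := by
          simp [minorWeight_apply, hvO, disjoint_right.1 hZO hvO]
      _ ≤ ∑ v ∈ C, minorWeight Z O t v := single_le_sum (fun _ _ => Nat.zero_le _) hvC
  push Not at hCO
  have htr : IsTransversal (minor E Z O) (C \ Z) := by
    intro f hf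
    obtain ⟨e, he, rfl⟩ := mem_image.1 hf
    obtain ⟨heE, heZ⟩ := mem_filter.1 he
    obtain ⟨w, hw⟩ := hC e heE
    obtain ⟨hwe, hwC⟩ := mem_inter.1 hw
    have hwZ : w ∉ Z := fun hwZ => by simpa [heZ] using mem_inter.2 ⟨hwe, hwZ⟩
    exact ⟨w, by simp [hwe, hwC, hwZ, hCO w hwC]⟩
  calc t ≤ #(C \ Z) := tau_le_card htr
    _ = ∑ v ∈ C \ Z, minorWeight Z O t v := by
        rw [card_eq_sum_ones]
        refine sum_congr rfl fun v hv => ?_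
        obtain ⟨hvC, hvZ⟩ := mem_sdiff.1 hv
        simp [minorWeight_apply, hvZ, hCO v hvC]
    _ ≤ ∑ v ∈ C, minorWeight Z O t v := sum_le_sum_of_subset sdiff_subset

theorem isKonig_minor_of_card_le_minorWeight [Finite V] {E : Finset (Finset V)} {Z O : Finset V}
    (f : Fin (tau (minor E Z O)) → Finset V) (hfE : ∀ i, f i ∈ E)
    (hcount : ∀ v, #{i | v ∈ f i} ≤ minorWeight Z O (tau (minor E Z O)) v) :
    IsKonig (minor E Z O) := by
  have hfZ (i) : f i ∩ Z = ∅ := by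
    refine eq_empty_of_forall_notMem fun v hv => ?_
    have hpos : 0 < #{i | v ∈ f i} := card_pos.2 ⟨i, by simp [(mem_inter.1 hv).1]⟩
    have hle := hcount v
    rw [minorWeight_apply, if_pos (mem_inter.1 hv).2] at hle
    omega
  have hmem (i) : f i \ O ∈ minor E Z O := mem_image_of_mem _ (mem_filter.2 ⟨hfE i, hfZ i⟩)
  refine isKonig_of_pairwise_disjoint _ hmem (fun i => ?_) fun i j hij => ?_
  · refine nonempty_iff_ne_empty.2 fun h => ?_
    have htau := tau_eq_zero_of_empty_mem (h ▸ hmem i)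
    exact absurd i.pos (by omega)
  · refine disjoint_left.2 fun v hvi hvj => ?_
    obtain ⟨hvi, hvO⟩ := mem_sdiff.1 hvi
    have hvZ : v ∉ Z := fun hvZ => by simpa [hfZ i] using mem_inter.2 ⟨hvi, hvZ⟩
    have htwo : #{i, j} ≤ #{i | v ∈ f i} :=
      card_le_card fun k hk => by rcases mem_insert.1 hk with rfl | hk <;> simp_all
    have hle := hcount v
    rw [card_pair hij] at htwo
    rw [minorWeight_apply, if_neg hvZ, if_neg hvO] at hle
    omega

end Hypergraph

theorem packing_of_symbolic_eq_ordinary_general {K V : Type*} [Field K] [Fintype V] [DecidableEq V]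
    (E : Finset (Finset V))
    (hsym : ∀ s : ℕ, 1 ≤ s →
      (⨅ C ∈ {C : Finset V | IsMinTransversal E C},
        (Ideal.span ((fun x : V => (X x : MvPolynomial V K)) '' ↑C)) ^ s) =
      (Ideal.span ((fun e : Finset V => ∏ x ∈ e, (X x : MvPolynomial V K)) '' ↑E)) ^ s) :
    ∀ Z O : Finset V, Disjoint Z O →
      IsKonig ((E.filter fun e => e ∩ Z = ∅).image fun e => e \ O) := by
  intro Z O hZO
  show IsKonig (minor E Z O)
  set t := tau (minor E Z O)
  have hsymbolic : monomial (minorWeight Z O t) (1 : K) ∈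
      ⨅ C ∈ {C : Finset V | IsMinTransversal E C},
        (Ideal.span ((fun x : V => (X x : MvPolynomial V K)) '' ↑C)) ^ t := by
    simp only [Submodule.mem_iInf]
    exact fun C hC => Ideal.pow_le_pow_right (tau_minor_le_sum_minorWeight hZO hC.1)
      (monomial_mem_span_X_image_pow_sum C _)
  have hpow : monomial (minorWeight Z O t) (1 : K) ∈
      Ideal.span ((fun e : Finset V => ∏ x ∈ e, (X x : MvPolynomial V K)) '' ↑E) ^ t := by
    rcases t.eq_zero_or_pos with ht | ht
    · simp [ht]
    · rw [← hsym t ht]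
      exact hsymbolic
  obtain ⟨f, hfE, hcount⟩ := exists_edges_of_monomial_mem_span_prod_X_pow E hpow
  exact isKonig_minor_of_card_le_minorWeight f hfE hcount

/-- If the squarefree monomial ideal `I` generated by the edges of `E` satisfies
`I^{(s)} = I^s` for all `s ≥ 1` (where `I^{(s)}` is the intersection of the `s`-th
powers of the minimal primes, given by minimal transversals), then `I` has the
packing property: every minor of `E`, obtained by deleting the vertices of `Z`
(setting variables to `0`) and contracting the vertices of `O` (setting variables
to `1`), is König. -/
theorem packing_of_symbolic_eq_ordinary {K V : Type*} [Field K] [Fintype V] [DecidableEq V]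
    (E : Finset (Finset V)) (hE : ∀ e ∈ E, e.Nonempty)
    (hsym : ∀ s : ℕ, 1 ≤ s →
      (⨅ C ∈ {C : Finset V | IsMinTransversal E C},
        (Ideal.span ((fun x : V => (X x : MvPolynomial V K)) '' ↑C)) ^ s) =
      (Ideal.span ((fun e : Finset V => ∏ x ∈ e, (X x : MvPolynomial V K)) '' ↑E)) ^ s) :
    ∀ Z O : Finset V, Disjoint Z O →
      IsKonig ((E.filter fun e => e ∩ Z = ∅).image fun e => e \ O) :=
  packing_of_symbolic_eq_ordinary_general E hsym
end
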